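/- arXiv:1203.5009 — 7 statements merged into one kernel-verified Lean document; each statement's English description precedes it below -/
import Mathlib

section
/- Let A be an additive category and X an object such that End(X) is semiperfect and every idempotent endomorphism of X splits. Then X decomposes as a finite direct sum X = X_1 ⊕ ... ⊕ X_n where each End(X_i) is a local ring. -/
open CategoryTheory CategoryTheory.Limits

universe v u

/-- The corner ring `e A e` of an idempotent `e` is local (with identity `e`):
`e ≠ 0` and for every `x`, either `e*x*e` or `e - e*x*e` is invertible in `e A e`. -/
def CornerLocal {A : Type*} [Ring A] (e : A) : Prop :=
  e ≠ 0 ∧ ∀ x : A,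
    (∃ y : A, (e * x * e) * (e * y * e) = e ∧ (e * y * e) * (e * x * e) = e) ∨
    (∃ y : A, (e - e * x * e) * (e * y * e) = e ∧ (e * y * e) * (e - e * x * e) = e)

/-- `End X` is semiperfect: it admits a complete set of orthogonal idempotents whose
corner rings are local. -/
def SemiperfectEnd {C : Type u} [Category.{v} C] [Preadditive C] (X : C) : Prop :=
  ∃ (n : ℕ) (e : Fin n → End X), CompleteOrthogonalIdempotents e ∧ ∀ i, CornerLocal (e i)

/-- Every idempotent endomorphism of `X` splits. -/
def IdempotentsSplit {C : Type u} [Category.{v} C] [Preadditive C] (X : C) : Prop :=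
  ∀ e : X ⟶ X, e ≫ e = e →
    ∃ (Y : C) (p : X ⟶ Y) (q : Y ⟶ X), p ≫ q = e ∧ q ≫ p = 𝟙 Y

/-- Proposition 1.2, first direction: in an additive category, if
`End X` is semiperfect and every idempotent endomorphism of `X` splits, then
`X = X₁ ⊕ ⋯ ⊕ Xₙ` with each `End Xᵢ` local. -/
theorem decompose_of_semiperfect_end {C : Type u} [Category.{v} C] [Preadditive C]
    [HasFiniteBiproducts C] (X : C)
    (h1 : SemiperfectEnd X) (h2 : IdempotentsSplit X) :
    ∃ (n : ℕ) (Xi : Fin n → C) (_ : X ≅ ⨁ Xi), ∀ i, IsLocalRing (End (Xi i)) := by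
  obtain ⟨n, e, hco, hloc⟩ := h1
  have hsplit : ∀ i, ∃ (Y : C) (p : X ⟶ Y) (q : Y ⟶ X),
      p ≫ q = e i ∧ q ≫ p = 𝟙 Y := by
    intro i
    apply h2
    have := hco.idem i
    simpa [IsIdempotentElem, End.mul_def] using this
  choose Y p q hpq hqp using hsplit
  -- basic identities
  have hqe : ∀ i, q i ≫ (e i : X ⟶ X) = q i := fun i => by
    rw [← hpq, ← Category.assoc, hqp, Category.id_comp]
  have hep : ∀ i, (e i : X ⟶ X) ≫ p i = p i := fun i => by
    rw [← hpq, Category.assoc, hqp, Category.comp_id]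
  refine ⟨n, Y, ?_, ?_⟩
  · refine ⟨biproduct.lift p, biproduct.desc q, ?_, ?_⟩
    · rw [biproduct.lift_desc]
      have := hco.complete
      calc ∑ j, p j ≫ q j = ∑ j, (e j : X ⟶ X) := by
            exact Finset.sum_congr rfl fun j _ => hpq j
        _ = 𝟙 X := this
    · ext i j
      simp only [Category.assoc, biproduct.lift_π, biproduct.ι_desc_assoc,
        Category.comp_id, Category.id_comp]
      rw [biproduct.ι_π]
      by_cases hij : j = i
      · subst hij; simp [hqp j]
      · rw [dif_neg hij]
        have h0 : (e j : X ⟶ X) ≫ e i = 0 := by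
          have := hco.ortho (Ne.symm hij)
          simpa [End.mul_def] using this
        calc q j ≫ p i = (q j ≫ (e j : X ⟶ X)) ≫ ((e i : X ⟶ X) ≫ p i) := by
              rw [hqe, hep]
          _ = q j ≫ ((e j : X ⟶ X) ≫ e i) ≫ p i := by simp [Category.assoc]
          _ = 0 := by rw [h0]; simp
  · intro i
    have hne : (e i : X ⟶ X) ≠ 0 := (hloc i).1
    have hnontriv : Nontrivial (End (Y i)) := by
      refine ⟨𝟙 (Y i), 0, fun h => hne ?_⟩
      rw [← hpq, ← Category.id_comp (q i), h]
      simp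
    have key : ∀ a : End (Y i), IsUnit a ∨ IsUnit (1 - a) := ?_
    · exact { toNontrivial := hnontriv,
              isUnit_or_isUnit_of_add_one := fun {a b} hab => by
                have hb : b = 1 - a := eq_sub_of_add_eq' hab
                rw [hb]; exact key a }
    intro a
    -- transfer `a` to the corner ring
    set x : End X := (p i ≫ (a : Y i ⟶ Y i) ≫ q i : X ⟶ X) with hx_def
    have hex : e i * x * e i = x := by
      show ((e i : X ⟶ X) ≫ ((x : X ⟶ X) ≫ (e i : X ⟶ X)) : X ⟶ X) = x
      show (e i : X ⟶ X) ≫ (p i ≫ a ≫ q i) ≫ e i = p i ≫ a ≫ q i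
      rw [← Category.assoc, ← Category.assoc, ← Category.assoc, hep]
      rw [Category.assoc, Category.assoc, hqe]
    have hqx : q i ≫ (x : X ⟶ X) = a ≫ q i := by
      show q i ≫ p i ≫ a ≫ q i = a ≫ q i
      rw [← Category.assoc, hqp, Category.id_comp]
    have hxp : (x : X ⟶ X) ≫ p i = p i ≫ a := by
      show (p i ≫ a ≫ q i) ≫ p i = p i ≫ a
      rw [Category.assoc, Category.assoc, hqp, Category.comp_id]
    rcases (hloc i).2 x with ⟨y, hy1, hy2⟩ | ⟨y, hy1, hy2⟩
    · left
      rw [hex] at hy1 hy2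
      set z : End X := e i * y * e i with hz_def
      have hzx : (z : X ⟶ X) ≫ x = e i := hy1
      have hxz : (x : X ⟶ X) ≫ z = e i := hy2
      set c : End (Y i) := (q i ≫ (z : X ⟶ X) ≫ p i : Y i ⟶ Y i) with hc_def
      have hac : (a : Y i ⟶ Y i) ≫ c = 𝟙 (Y i) := by
        calc (a : Y i ⟶ Y i) ≫ c = (a ≫ q i) ≫ (z : X ⟶ X) ≫ p i := by
              simp [hc_def, Category.assoc]
          _ = (q i ≫ (x : X ⟶ X)) ≫ z ≫ p i := by rw [hqx]
          _ = q i ≫ ((x : X ⟶ X) ≫ z) ≫ p i := by simp [Category.assoc]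
          _ = q i ≫ (e i : X ⟶ X) ≫ p i := by rw [hxz]
          _ = 𝟙 (Y i) := by rw [hep, hqp]
      have hca : (c : Y i ⟶ Y i) ≫ a = 𝟙 (Y i) := by
        calc (c : Y i ⟶ Y i) ≫ a = q i ≫ (z : X ⟶ X) ≫ (p i ≫ (a : Y i ⟶ Y i)) := by
              rw [hc_def]; simp [Category.assoc]
          _ = q i ≫ (z : X ⟶ X) ≫ ((x : X ⟶ X) ≫ p i) := by rw [hxp]
          _ = q i ≫ ((z : X ⟶ X) ≫ x) ≫ p i := by simp [Category.assoc]
          _ = q i ≫ (e i : X ⟶ X) ≫ p i := by rw [hzx]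
          _ = 𝟙 (Y i) := by rw [hep, hqp]
      exact ⟨⟨a, c, hca, hac⟩, rfl⟩
    · right
      rw [hex] at hy1 hy2
      set z : End X := e i * y * e i with hz_def
      have hzx : (z : X ⟶ X) ≫ ((e i : X ⟶ X) - x) = e i := hy1
      have hxz : ((e i : X ⟶ X) - x) ≫ z = e i := hy2
      set c : End (Y i) := (q i ≫ (z : X ⟶ X) ≫ p i : Y i ⟶ Y i) with hc_def
      have hone : ((1 : End (Y i)) : Y i ⟶ Y i) = 𝟙 (Y i) := rfl
      have hqex : q i ≫ ((e i : X ⟶ X) - x) = ((1 - a : End (Y i)) : Y i ⟶ Y i) ≫ q i := by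
        rw [Preadditive.comp_sub, Preadditive.sub_comp, hqe, hqx, hone, Category.id_comp]
      have hexp : ((e i : X ⟶ X) - x) ≫ p i = p i ≫ ((1 - a : End (Y i)) : Y i ⟶ Y i) := by
        rw [Preadditive.sub_comp, Preadditive.comp_sub, hep, hxp, hone, Category.comp_id]
      have hac : ((1 - a : End (Y i)) : Y i ⟶ Y i) ≫ c = 𝟙 (Y i) := by
        calc ((1 - a : End (Y i)) : Y i ⟶ Y i) ≫ c
            = (((1 - a : End (Y i)) : Y i ⟶ Y i) ≫ q i) ≫ (z : X ⟶ X) ≫ p i := by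
              simp [hc_def, Category.assoc]
          _ = (q i ≫ ((e i : X ⟶ X) - x)) ≫ (z : X ⟶ X) ≫ p i := by rw [hqex]
          _ = q i ≫ (((e i : X ⟶ X) - x) ≫ z) ≫ p i := by simp [Category.assoc]
          _ = q i ≫ (e i : X ⟶ X) ≫ p i := by rw [hxz]
          _ = 𝟙 (Y i) := by rw [hep, hqp]
      have hca : (c : Y i ⟶ Y i) ≫ ((1 - a : End (Y i)) : Y i ⟶ Y i) = 𝟙 (Y i) := by
        calc (c : Y i ⟶ Y i) ≫ ((1 - a : End (Y i)) : Y i ⟶ Y i)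
            = q i ≫ (z : X ⟶ X) ≫ (p i ≫ ((1 - a : End (Y i)) : Y i ⟶ Y i)) := by
              rw [hc_def]; simp [Category.assoc]
          _ = q i ≫ (z : X ⟶ X) ≫ (((e i : X ⟶ X) - x) ≫ p i) := by rw [hexp]
          _ = q i ≫ ((z : X ⟶ X) ≫ ((e i : X ⟶ X) - x)) ≫ p i := by simp [Category.assoc]
          _ = q i ≫ (e i : X ⟶ X) ≫ p i := by rw [hzx]
          _ = 𝟙 (Y i) := by rw [hep, hqp]
      exact ⟨⟨1 - a, c, hca, hac⟩, rfl⟩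
end

section
/- Let A be an additive category and X = X_1 ⊕ ... ⊕ X_n with each End(X_i) local. Then every nonzero direct summand M of X is isomorphic to a direct sum of a subfamily of the X_i; in particular the decomposition of X into indecomposables is unique up to isomorphism and permutation. -/
open CategoryTheory CategoryTheory.Limits

universe v u

attribute [local instance] CategoryTheory.Limits.hasBinaryBiproducts_of_finite_biproducts

/-- An object of an additive category is indecomposable if it is nonzero and whenever it
is isomorphic to a biproduct of two objects, one of them is zero. -/
def IndecObj {C : Type u} [Category.{v} C] [Preadditive C] [HasFiniteBiproducts C]
    (X : C) : Prop :=
  ¬ IsZero X ∧ ∀ (A B : C), (X ≅ A ⊞ B) → (IsZero A ∨ IsZero B)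

/-!
Locality of `End A` is used in two forms: if `f + g = 𝟙 A` then `f` or `g` is invertible, and
`End A` has no idempotents besides `0` and `1`. Applied to the entries of an isomorphism
`A ⊞ B ≅ M ⊞ N`, the first gives the exchange property: `A` splits off `M` or `N`, and `B` is
isomorphic to what remains. When idempotents split, a summand `M` of `X₁ ⊞ ⋯ ⊞ Xₙ` has a
complement `N`, and exchanging `X₁, X₂, …` into `M ⊞ N` one at a time exhibits `M` as the sum of
those `Xᵢ` that land in `M`; an arbitrary `C` embeds fully faithfully into its Karoubi envelope,
where idempotents split. In particular an indecomposable summand is isomorphic to some `Xᵢ`, so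
its endomorphism ring is local, and two decompositions are matched one summand at a time by
cancellation: `A ⊞ B ≅ A ⊞ B'` forces `B ≅ B'` (Gaussian elimination once the `A ⟶ A` entry has
been made invertible).
-/

theorem IsLocalRing.eq_zero_or_eq_one_of_isIdempotentElem {R : Type*} [Ring R] [IsLocalRing R]
    {e : R} (he : IsIdempotentElem e) : e = 0 ∨ e = 1 := by
  rcases IsLocalRing.isUnit_or_isUnit_of_add_one (add_sub_cancel e 1) with hu | hu
  · exact Or.inr ((IsIdempotentElem.iff_eq_one_of_isUnit hu).1 he)
  · exact Or.inl (sub_eq_self.1 ((IsIdempotentElem.iff_eq_one_of_isUnit hu).1 he.one_sub))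

instance IsLocalRing.toIsDedekindFiniteMonoid {R : Type*} [Ring R] [IsLocalRing R] :
    IsDedekindFiniteMonoid R where
  mul_eq_one_symm {a b} h := by
    have hba : IsIdempotentElem (b * a) := by
      rw [IsIdempotentElem, mul_assoc, ← mul_assoc a, h, one_mul]
    refine (IsLocalRing.eq_zero_or_eq_one_of_isIdempotentElem hba).resolve_left fun h0 => ?_
    apply one_ne_zero (α := R)
    calc (1 : R) = a * (b * a) * b := by rw [← mul_assoc, h, one_mul, h]
      _ = 0 := by rw [h0, mul_zero, zero_mul]

theorem CategoryTheory.Functor.FullyFaithful.isLocalRing_end {C D : Type*} [Category C]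
    [Category D] [Preadditive C] [Preadditive D] {F : C ⥤ D} [F.Additive]
    (hF : F.FullyFaithful) (X : C) [IsLocalRing (End X)] : IsLocalRing (End (F.obj X)) :=
  let e : End X ≃+* End (F.obj X) := MulEquiv.toRingEquiv (hF.mulEquivEnd X) fun _ _ => F.map_add
  RingHom.domain_isLocalRing (e.symm : End (F.obj X) →+* End X)

namespace CategoryTheory

variable {C : Type u} [Category.{v} C]

noncomputable def Retract.ofIsIsoComp {X Y : C} (i : X ⟶ Y) (r : Y ⟶ X) [IsIso (i ≫ r)] :
    Retract X Y where
  i := i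
  r := r ≫ inv (i ≫ r)
  retract := by rw [← Category.assoc, IsIso.hom_inv_id]

variable [Preadditive C]

theorem isIso_or_isIso_of_add_eq_id {A : C} [IsLocalRing (End A)] {f g : A ⟶ A}
    (h : f + g = 𝟙 A) : IsIso f ∨ IsIso g := by
  simpa only [← isUnit_iff_isIso] using IsLocalRing.isUnit_or_isUnit_of_add_one (R := End A) h

theorem isIso_left_of_isIso_comp {A : C} [IsLocalRing (End A)] {f g : End A}
    (h : IsIso (f ≫ g)) : IsIso f := by
  have hu : IsUnit (g * f) := (isUnit_iff_isIso (f ≫ g)).2 h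
  exact (isUnit_iff_isIso f).1 (isUnit_of_mul_isUnit_right hu)

theorem not_isZero_of_isLocalRing_end {A : C} [IsLocalRing (End A)] : ¬ IsZero A := fun h =>
  one_ne_zero (α := End A) ((IsZero.iff_id_eq_zero A).1 h)

theorem Retract.isZero {X Y : C} (h : Retract X Y) (hY : IsZero Y) : IsZero X := by
  rw [IsZero.iff_id_eq_zero, ← h.retract, hY.eq_zero_of_tgt h.i, zero_comp]

theorem Retract.isIso_i_of_isLocalRing {X Y : C} [IsLocalRing (End Y)] (h : Retract X Y)
    (hX : ¬ IsZero X) : IsIso h.i := by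
  let e : End Y := h.r ≫ h.i
  have he : IsIdempotentElem e := by simp [e, IsIdempotentElem, End.mul_def]
  rcases IsLocalRing.eq_zero_or_eq_one_of_isIdempotentElem he with h0 | h1
  · refine absurd ((IsZero.iff_id_eq_zero X).2 ?_) hX
    calc 𝟙 X = h.i ≫ e ≫ h.r := by simp [e]
      _ = 0 := by rw [h0]; simp
  · exact ⟨h.r, h.retract, h1⟩

section Biproducts

variable [HasFiniteBiproducts C]

theorem isZero_biproduct_of_isEmpty {J : Type} [Finite J] [IsEmpty J] (f : J → C) :
    IsZero (⨁ f) :=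
  (IsZero.iff_id_eq_zero _).2 (biproduct.hom_ext _ _ isEmptyElim)

noncomputable def biproductSuccAboveIso {n : ℕ} (f : Fin (n + 1) → C) (p : Fin (n + 1)) :
    ⨁ f ≅ f p ⊞ ⨁ fun i => f (p.succAbove i) where
  hom := biprod.lift (biproduct.π f p) (biproduct.lift fun i => biproduct.π f (p.succAbove i))
  inv := biprod.desc (biproduct.ι f p) (biproduct.desc fun i => biproduct.ι f (p.succAbove i))
  hom_inv_id := by
    rw [biprod.lift_desc, biproduct.lift_desc, ← biproduct.total, Fin.sum_univ_succAbove _ p]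
  inv_hom_id := by
    ext <;> simp [biproduct.ι_π, Fin.succAbove_ne, (Fin.succAbove_ne _ _).symm]

theorem exists_nonempty_iso_of_retract_biproduct {J : Type} [Fintype J] {Y : J → C}
    [∀ j, IsLocalRing (End (Y j))] {A : C} [IsLocalRing (End A)] (h : Retract A (⨁ Y)) :
    ∃ j, Nonempty (A ≅ Y j) := by
  have hsum : ∑ j, (h.i ≫ biproduct.π Y j) ≫ (biproduct.ι Y j ≫ h.r) = 𝟙 A := by
    calc _ = h.i ≫ (∑ j, biproduct.π Y j ≫ biproduct.ι Y j) ≫ h.r := by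
          simp only [Preadditive.sum_comp, Preadditive.comp_sum, Category.assoc]
      _ = 𝟙 A := by simp
  obtain ⟨j, -, hj⟩ := IsLocalRing.exists_of_isUnit_sum (R := End A) (s := Finset.univ)
    (by rw [hsum]; exact isUnit_one)
  have := (isUnit_iff_isIso _).1 hj
  let hA := Retract.ofIsIsoComp (h.i ≫ biproduct.π Y j) (biproduct.ι Y j ≫ h.r)
  have := hA.isIso_i_of_isLocalRing not_isZero_of_isLocalRing_end
  exact ⟨j, ⟨asIso hA.i⟩⟩

theorem biprod_iso_inl_entries_add {A B M N : C} (φ : A ⊞ B ≅ M ⊞ N) :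
    (biprod.inl ≫ φ.hom ≫ biprod.fst) ≫ (biprod.inl ≫ φ.inv ≫ biprod.fst) +
      (biprod.inl ≫ φ.hom ≫ biprod.snd) ≫ (biprod.inr ≫ φ.inv ≫ biprod.fst) = 𝟙 A := by
  calc _ = biprod.inl ≫ φ.hom ≫ (biprod.fst ≫ biprod.inl + biprod.snd ≫ biprod.inr) ≫
        φ.inv ≫ biprod.fst := by
        simp only [Preadditive.add_comp, Preadditive.comp_add, Category.assoc]
    _ = 𝟙 A := by simp

theorem nonempty_iso_of_biprod_iso_biprod {A B B' : C} [IsLocalRing (End A)]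
    (φ : A ⊞ B ≅ A ⊞ B') : Nonempty (B ≅ B') := by
  let α := biprod.inl ≫ φ.hom ≫ biprod.fst
  let β := biprod.inl ≫ φ.hom ≫ biprod.snd
  let γ := biprod.inr ≫ φ.inv ≫ biprod.fst
  rcases isIso_or_isIso_of_add_eq_id (biprod_iso_inl_entries_add φ) with h | h
  · have : IsIso α := isIso_left_of_isIso_comp h
    exact ⟨Biprod.isoElim φ⟩
  · have : IsIso (β ≫ γ) := h
    -- a unipotent change of basis makes the `A ⟶ A` entry `α + β ≫ t = 𝟙 A` invertible
    let t := γ ≫ inv (β ≫ γ) ≫ (𝟙 A - α)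
    have hβt : β ≫ t = 𝟙 A - α := by
      simp only [t, ← Category.assoc, IsIso.hom_inv_id, Category.id_comp]
    have hcorner : biprod.inl ≫ (φ ≪≫ Biprod.unipotentLower t).hom ≫ biprod.fst = α + β ≫ t := by
      simp [α, β]
    have : IsIso (biprod.inl ≫ (φ ≪≫ Biprod.unipotentLower t).hom ≫ biprod.fst) := by
      rw [hcorner, hβt, add_sub_cancel]; infer_instance
    exact ⟨Biprod.isoElim (φ ≪≫ Biprod.unipotentLower t)⟩

theorem Retract.exists_iso_biprod [IsIdempotentComplete C] {M X : C} (h : Retract M X) :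
    ∃ N, Nonempty (X ≅ M ⊞ N) := by
  obtain ⟨N, i, q, hiq, hqi⟩ := IsIdempotentComplete.idempotents_split X (𝟙 X - h.r ≫ h.i)
    (by simp [Preadditive.comp_sub, Preadditive.sub_comp])
  have hq : h.i ≫ q = 0 := by
    calc h.i ≫ q = h.i ≫ (q ≫ i) ≫ q := by simp [hiq]
      _ = 0 := by simp [hqi, Preadditive.comp_sub, Preadditive.sub_comp]
  have hi : i ≫ h.r = 0 := by
    calc i ≫ h.r = i ≫ (q ≫ i) ≫ h.r := by simp [reassoc_of% hiq]
      _ = 0 := by simp [hqi, Preadditive.sub_comp]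
  let b : BinaryBicone M N := ⟨X, h.r, q, h.i, i, h.retract, hq, hi, hiq⟩
  exact ⟨N, ⟨biprod.uniqueUpToIso M N (isBinaryBilimitOfTotal b (by simp [b, hqi]))⟩⟩

theorem exchange_of_biprod_iso_of_isIso_comp [IsIdempotentComplete C] {A B M N : C}
    [IsLocalRing (End A)] (φ : A ⊞ B ≅ M ⊞ N)
    (h : IsIso ((biprod.inl ≫ φ.hom ≫ biprod.fst) ≫ (biprod.inl ≫ φ.inv ≫ biprod.fst))) :
    ∃ M', Nonempty (M ≅ A ⊞ M') ∧ Nonempty (B ≅ M' ⊞ N) := by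
  obtain ⟨M', ⟨e⟩⟩ := (Retract.ofIsIsoComp (biprod.inl ≫ φ.hom ≫ biprod.fst)
    (biprod.inl ≫ φ.inv ≫ biprod.fst)).exists_iso_biprod
  exact ⟨M', ⟨e⟩, nonempty_iso_of_biprod_iso_biprod
    (φ ≪≫ biprod.mapIso e (Iso.refl N) ≪≫ biprod.associator A M' N)⟩

theorem exchange_of_biprod_iso [IsIdempotentComplete C] {A B M N : C}
    [IsLocalRing (End A)] (φ : A ⊞ B ≅ M ⊞ N) :
    (∃ M', Nonempty (M ≅ A ⊞ M') ∧ Nonempty (B ≅ M' ⊞ N)) ∨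
      ∃ N', Nonempty (N ≅ A ⊞ N') ∧ Nonempty (B ≅ M ⊞ N') := by
  rcases isIso_or_isIso_of_add_eq_id (biprod_iso_inl_entries_add φ) with h | h
  · exact Or.inl (exchange_of_biprod_iso_of_isIso_comp φ h)
  · obtain ⟨N', hN', ⟨e⟩⟩ := exchange_of_biprod_iso_of_isIso_comp (φ ≪≫ biprod.braiding M N)
      (by simpa [biprod.lift_eq] using h)
    exact Or.inr ⟨N', hN', ⟨e ≪≫ biprod.braiding N' M⟩⟩

theorem exists_iso_biproduct_subfamily_of_retract_of_isIdempotentComplete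
    [IsIdempotentComplete C] {n : ℕ} (X : Fin n → C) [∀ i, IsLocalRing (End (X i))] {M : C}
    (h : Retract M (⨁ X)) : ∃ (m : ℕ) (g : Fin m ↪ Fin n), Nonempty (M ≅ ⨁ fun j => X (g j)) := by
  induction n generalizing M with
  | zero =>
    exact ⟨0, Function.Embedding.refl _, ⟨(h.isZero (isZero_biproduct_of_isEmpty X)).iso
      (isZero_biproduct_of_isEmpty _)⟩⟩
  | succ n ih =>
    obtain ⟨N, ⟨e⟩⟩ := h.exists_iso_biprod
    have eX : ⨁ X ≅ X 0 ⊞ ⨁ fun i : Fin n => X i.succ := biproductSuccAboveIso X 0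
    rcases exchange_of_biprod_iso (eX.symm ≪≫ e) with
      ⟨M', ⟨eM⟩, ⟨eM'⟩⟩ | ⟨N', -, ⟨eM⟩⟩
    · obtain ⟨m, g, ⟨e'⟩⟩ :=
        ih (fun i => X i.succ) ⟨biprod.inl ≫ eM'.inv, eM'.hom ≫ biprod.fst, by simp⟩
      let g' : Fin (m + 1) ↪ Fin (n + 1) := ⟨Fin.cons 0 (Fin.succ ∘ g), Fin.cons_injective_iff.2
        ⟨by simp [Fin.succ_ne_zero], (Fin.succ_injective n).comp g.injective⟩⟩
      exact ⟨m + 1, g', ⟨eM ≪≫ biprod.mapIso (Iso.refl _) e' ≪≫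
        (biproductSuccAboveIso (fun j => X (g' j)) 0).symm⟩⟩
    · obtain ⟨m, g, ⟨e'⟩⟩ :=
        ih (fun i => X i.succ) ⟨biprod.inl ≫ eM.inv, eM.hom ≫ biprod.fst, by simp⟩
      exact ⟨m, g.trans (Fin.succEmb n), ⟨e'⟩⟩

theorem exists_iso_biproduct_subfamily_of_retract {n : ℕ} (X : Fin n → C)
    [∀ i, IsLocalRing (End (X i))] {M : C} (h : Retract M (⨁ X)) :
    ∃ (m : ℕ) (g : Fin m ↪ Fin n), Nonempty (M ≅ ⨁ fun j => X (g j)) := by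
  let F := Idempotents.toKaroubi C
  have hF : F.FullyFaithful := .ofFullyFaithful F
  have (i : Fin n) : IsLocalRing (End (F.obj (X i))) := hF.isLocalRing_end (X i)
  obtain ⟨m, g, ⟨e⟩⟩ := exists_iso_biproduct_subfamily_of_retract_of_isIdempotentComplete
    (fun i => F.obj (X i)) ((h.map F).trans (Retract.ofIso (F.mapBiproduct X)))
  exact ⟨m, g, ⟨hF.preimageIso (e ≪≫ (F.mapBiproduct _).symm)⟩⟩

theorem exists_iso_of_indecObj_of_retract {n : ℕ} (X : Fin n → C) [∀ i, IsLocalRing (End (X i))]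
    {Y : C} (hY : IndecObj Y) (h : Retract Y (⨁ X)) : ∃ i, Nonempty (Y ≅ X i) := by
  obtain ⟨m, g, ⟨e⟩⟩ := exists_iso_biproduct_subfamily_of_retract X h
  cases m with
  | zero => exact absurd ((isZero_biproduct_of_isEmpty _).of_iso e) hY.1
  | succ m =>
    rcases hY.2 _ _ (e ≪≫ biproductSuccAboveIso _ 0) with h0 | h0
    · exact absurd h0 not_isZero_of_isLocalRing_end
    · exact ⟨g 0, ⟨e ≪≫ biproductSuccAboveIso _ 0 ≪≫ (isoBiprodZero h0).symm⟩⟩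

theorem biproduct_iso_unique {n m : ℕ} (X : Fin n → C) (Y : Fin m → C)
    [∀ i, IsLocalRing (End (X i))] [∀ j, IsLocalRing (End (Y j))] (e : ⨁ X ≅ ⨁ Y) :
    n = m ∧ ∃ σ : Fin n ≃ Fin m, ∀ i, Nonempty (X i ≅ Y (σ i)) := by
  induction n generalizing m with
  | zero =>
    cases m with
    | zero => exact ⟨rfl, Equiv.refl _, finZeroElim⟩
    | succ m =>
      exact absurd (((biproduct.bicone Y).retract 0).trans (Retract.ofIso e.symm) |>.isZero
        (isZero_biproduct_of_isEmpty X)) not_isZero_of_isLocalRing_end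
  | succ n ih =>
    obtain ⟨j, ⟨eX⟩⟩ := exists_nonempty_iso_of_retract_biproduct
      (((biproduct.bicone X).retract 0).trans (Retract.ofIso e))
    cases m with
    | zero => exact j.elim0
    | succ m =>
      obtain ⟨c⟩ := nonempty_iso_of_biprod_iso_biprod ((biproductSuccAboveIso X 0).symm ≪≫ e ≪≫
        biproductSuccAboveIso Y j ≪≫ biprod.mapIso eX.symm (Iso.refl _))
      obtain ⟨rfl, σ, hσ⟩ := ih _ _ c
      refine ⟨rfl, (finSuccEquiv' 0).trans (σ.optionCongr.trans (finSuccEquiv' j).symm),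
        fun i => ?_⟩
      rcases Fin.eq_self_or_eq_succAbove 0 i with rfl | ⟨i, rfl⟩
      · simpa using ⟨eX⟩
      · simpa only [Equiv.trans_apply, finSuccEquiv'_succAbove, Equiv.optionCongr_apply,
          Option.map_some, finSuccEquiv'_symm_some] using hσ i

end Biproducts

end CategoryTheory

theorem summand_of_local_decomposition_general {C : Type u} [Category.{v} C] [Preadditive C]
    [HasFiniteBiproducts C] (X : C) (n : ℕ) (Xi : Fin n → C) (e : X ≅ ⨁ Xi)
    (hloc : ∀ i, IsLocalRing (End (Xi i)))
    (M : C) (u : M ⟶ X) (r : X ⟶ M) (hur : u ≫ r = 𝟙 M) :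
    (∃ (m : ℕ) (g : Fin m ↪ Fin n), Nonempty (M ≅ ⨁ fun j => Xi (g j))) ∧
    ∀ (m : ℕ) (Y : Fin m → C), (∀ j, IndecObj (Y j)) → (X ≅ ⨁ Y) →
      n = m ∧ ∃ σ : Fin n ≃ Fin m, ∀ i, Nonempty (Xi i ≅ Y (σ i)) := by
  refine ⟨exists_iso_biproduct_subfamily_of_retract Xi ⟨u ≫ e.hom, e.inv ≫ r, by simp [hur]⟩,
    fun m Y hY eY => ?_⟩
  choose τ hτ using fun j => exists_iso_of_indecObj_of_retract Xi (hY j)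
    (((biproduct.bicone Y).retract j).trans (Retract.ofIso (eY.symm ≪≫ e)))
  -- comparing with `Xi ∘ τ` instead of `Y` provides local endomorphism rings on both sides
  obtain ⟨hnm, σ, hσ⟩ := biproduct_iso_unique Xi (fun j => Xi (τ j))
    (e.symm ≪≫ eY ≪≫ biproduct.mapIso fun j => (hτ j).some)
  exact ⟨hnm, σ, fun i => ⟨(hσ i).some ≪≫ (hτ (σ i)).some.symm⟩⟩

/-- Proposition 1.2, uniqueness: if `X = X₁ ⊕ ⋯ ⊕ Xₙ` with each
`End Xᵢ` local, then every nonzero direct summand `M` of `X` is isomorphic to the direct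
sum of a subfamily of the `Xᵢ`; in particular the decomposition of `X` into
indecomposables is unique up to isomorphism and permutation. -/
theorem summand_of_local_decomposition {C : Type u} [Category.{v} C] [Preadditive C]
    [HasFiniteBiproducts C] (X : C) (n : ℕ) (Xi : Fin n → C) (e : X ≅ ⨁ Xi)
    (hloc : ∀ i, IsLocalRing (End (Xi i)))
    (M : C) (hM : ¬ IsZero M) (u : M ⟶ X) (r : X ⟶ M) (hur : u ≫ r = 𝟙 M) :
    (∃ (m : ℕ) (g : Fin m ↪ Fin n), Nonempty (M ≅ ⨁ fun j => Xi (g j))) ∧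
    ∀ (m : ℕ) (Y : Fin m → C), (∀ j, IndecObj (Y j)) → (X ≅ ⨁ Y) →
      n = m ∧ ∃ σ : Fin n ≃ Fin m, ∀ i, Nonempty (Xi i ≅ Y (σ i)) :=
  summand_of_local_decomposition_general X n Xi e hloc M u r hur
end

section
/- If A is a Krull-Schmidt additive category (every nonzero object is a finite direct sum of objects with local endomorphism rings) and I is an ideal of A, then the quotient category A/I is also Krull-Schmidt. -/
/-!
Decompose `X ≅ ⨁ Xᵢ` in `C` with every `End Xᵢ` local. A summand whose identity lies in `J`
is zero in `C/J`, so dropping those summands still gives an object isomorphic to `X` in `C/J`.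
For each remaining summand, `End_{C/J} Xᵢ` is a nonzero quotient of the local ring `End Xᵢ`,
hence local.
-/

open CategoryTheory CategoryTheory.Limits

universe v u

/-- A (two-sided categorical) ideal of a preadditive category: an additive subgroup of
each Hom group, closed under composition with arbitrary morphisms on both sides. -/
structure CatIdeal (C : Type u) [Category.{v} C] [Preadditive C] where
  I : ∀ X Y : C, AddSubgroup (X ⟶ Y)
  comp_left : ∀ {X Y Z : C} (f : X ⟶ Y) (g : Y ⟶ Z), f ∈ I X Y → f ≫ g ∈ I X Z
  comp_right : ∀ {X Y Z : C} (f : X ⟶ Y) (g : Y ⟶ Z), g ∈ I Y Z → f ≫ g ∈ I X Z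

attribute [local instance] CategoryTheory.Limits.hasBinaryBiproducts_of_finite_biproducts

/-- The congruence on `End X` induced by a categorical ideal; its quotient is the
endomorphism ring of `X` in the quotient category `C/I`. -/
def CatIdeal.endRingCon {C : Type u} [Category.{v} C] [Preadditive C] (J : CatIdeal C)
    (X : C) : RingCon (End X) where
  r f g := f - g ∈ J.I X X
  iseqv := by
    refine ⟨fun f => ?_, fun {a b} h => ?_, fun {a b c} h1 h2 => ?_⟩
    · simpa using (J.I X X).zero_mem
    · have := (J.I X X).neg_mem h
      rwa [neg_sub] at this
    · have := (J.I X X).add_mem h1 h2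
      rwa [sub_add_sub_cancel] at this
  mul' := by
    intro a b c d h1 h2
    show a * c - b * d ∈ J.I X X
    have h1' : a - b ∈ J.I X X := h1
    have h2' : c - d ∈ J.I X X := h2
    have key : a * c - b * d = c ≫ (a - b) + (c - d) ≫ b := by
      rw [CategoryTheory.End.mul_def, CategoryTheory.End.mul_def,
        Preadditive.comp_sub, Preadditive.sub_comp]
      abel
    rw [key]
    exact (J.I X X).add_mem (J.comp_right _ _ h1') (J.comp_left _ _ h2')
  add' := by
    intro a b c d h1 h2
    show a + c - (b + d) ∈ J.I X X
    have := (J.I X X).add_mem (show a - b ∈ J.I X X from h1) (show c - d ∈ J.I X X from h2)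
    rw [add_sub_add_comm]; exact this

theorem IsLocalRing.of_surjective_of_ring {R S : Type*} [Ring R] [IsLocalRing R] [Ring S]
    [Nontrivial S] (f : R →+* S) (hf : Function.Surjective f) : IsLocalRing S :=
  IsLocalRing.of_isUnit_or_isUnit_one_sub_self fun b => by
    obtain ⟨a, rfl⟩ := hf b
    rw [← map_one f, ← map_sub]
    exact (IsLocalRing.isUnit_or_isUnit_of_add_one (add_sub_cancel a 1)).imp
      (·.map f) (·.map f)

namespace CatIdeal

variable {C : Type u} [Category.{v} C] [Preadditive C] (J : CatIdeal C)

theorem id_mem_of_isZero {X : C} (hX : IsZero X) : 𝟙 X ∈ J.I X X := by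
  rw [hX.eq_of_src (𝟙 X) 0]
  exact (J.I X X).zero_mem

theorem isLocalRing_endRingCon_quotient {X : C} [IsLocalRing (End X)] (hX : 𝟙 X ∉ J.I X X) :
    IsLocalRing (J.endRingCon X).Quotient :=
  have : Nontrivial (J.endRingCon X).Quotient :=
    ⟨1, 0, fun h => hX (by
      simpa using show (1 : End X) - 0 ∈ J.I X X from (J.endRingCon X).eq.mp h)⟩
  IsLocalRing.of_surjective_of_ring _ (J.endRingCon X).mk'_surjective

theorem biproduct_map_mem [HasFiniteBiproducts C] {ι : Type} [Fintype ι] {f g : ι → C}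
    {h : ∀ j, f j ⟶ g j} (hh : ∀ j, h j ∈ J.I (f j) (g j)) :
    biproduct.map h ∈ J.I (⨁ f) (⨁ g) := by
  rw [biproduct.map_eq]
  exact AddSubgroup.sum_mem _ fun j _ => J.comp_right _ _ (J.comp_left _ _ (hh j))

/-- `X` and `Y` become isomorphic in the quotient category `C/J`. -/
def IsoMod (X Y : C) : Prop :=
  ∃ (p : X ⟶ Y) (q : Y ⟶ X), p ≫ q - 𝟙 X ∈ J.I X X ∧ q ≫ p - 𝟙 Y ∈ J.I Y Y

/-- Summands whose identity lies in `J` vanish in `C/J`. -/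
theorem isoMod_biproduct_subtype [HasFiniteBiproducts C] {ι : Type} [Finite ι] (f : ι → C)
    (P : ι → Prop) (hP : ∀ j, ¬ P j → 𝟙 (f j) ∈ J.I (f j) (f j)) :
    J.IsoMod (⨁ f) (⨁ Subtype.restrict P f) := by
  classical
  have := Fintype.ofFinite ι
  refine ⟨biproduct.toSubtype f P, biproduct.fromSubtype f P, ?_, by simp [zero_mem]⟩
  have : biproduct.toSubtype f P ≫ biproduct.fromSubtype f P - 𝟙 (⨁ f) =
      -biproduct.map fun j => if P j then 0 else 𝟙 (f j) := by
    ext j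
    by_cases hj : P j <;> simp [hj]
  rw [this]
  refine neg_mem (J.biproduct_map_mem fun j => ?_)
  split_ifs with hj
  exacts [zero_mem _, hP j hj]

variable {J}

theorem IsoMod.of_iso {X Y : C} (e : X ≅ Y) : J.IsoMod X Y :=
  ⟨e.hom, e.inv, by simp [zero_mem], by simp [zero_mem]⟩

theorem IsoMod.trans {X Y Z : C} (hXY : J.IsoMod X Y) (hYZ : J.IsoMod Y Z) : J.IsoMod X Z := by
  obtain ⟨p, q, hpq, hqp⟩ := hXY
  obtain ⟨p', q', hpq', hqp'⟩ := hYZ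
  refine ⟨p ≫ p', q' ≫ q, ?_, ?_⟩
  · have : (p ≫ p') ≫ q' ≫ q - 𝟙 X = p ≫ (p' ≫ q' - 𝟙 Y) ≫ q + (p ≫ q - 𝟙 X) := by
      simp [Preadditive.comp_sub, Preadditive.sub_comp]
    rw [this]
    exact add_mem (J.comp_right _ _ (J.comp_left _ _ hpq')) hpq
  · have : (q' ≫ q) ≫ p ≫ p' - 𝟙 Z = q' ≫ (q ≫ p - 𝟙 Y) ≫ p' + (q' ≫ p' - 𝟙 Z) := by
      simp [Preadditive.comp_sub, Preadditive.sub_comp]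
    rw [this]
    exact add_mem (J.comp_right _ _ (J.comp_left _ _ hqp)) hqp'

end CatIdeal

/-- Lemma 1.3(2): if `C` is a Krull-Schmidt additive category and `I`
is an ideal of `C`, then the quotient category `C/I` is Krull-Schmidt: every object that
is nonzero in `C/I` is, in `C/I`, a finite direct sum of objects whose endomorphism rings
in `C/I` are local. -/
theorem quotient_category_krullSchmidt {C : Type u} [Category.{v} C] [Preadditive C]
    [HasFiniteBiproducts C]
    (hKS : ∀ X : C, ¬ IsZero X →
      ∃ (n : ℕ) (Xi : Fin n → C) (_ : X ≅ ⨁ Xi), ∀ i, IsLocalRing (End (Xi i)))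
    (J : CatIdeal C) (X : C) (hX : 𝟙 X ∉ J.I X X) :
    ∃ (n : ℕ) (Xi : Fin n → C) (p : X ⟶ ⨁ Xi) (q : ⨁ Xi ⟶ X),
      p ≫ q - 𝟙 X ∈ J.I X X ∧ q ≫ p - 𝟙 (⨁ Xi) ∈ J.I (⨁ Xi) (⨁ Xi) ∧
      ∀ i, IsLocalRing ((J.endRingCon (Xi i)).Quotient) := by
  classical
  obtain ⟨n, Xi, e, hloc⟩ := hKS X fun h => hX (J.id_mem_of_isZero h)
  let P : Fin n → Prop := fun i => 𝟙 (Xi i) ∉ J.I (Xi i) (Xi i)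
  let ε := (Fintype.equivFin {i // P i}).symm
  obtain ⟨p, q, hpq, hqp⟩ :=
    ((CatIdeal.IsoMod.of_iso e).trans
      (J.isoMod_biproduct_subtype Xi P fun i hi => not_not.mp hi)).trans
      (CatIdeal.IsoMod.of_iso (biproduct.reindex ε (Subtype.restrict P Xi)).symm)
  refine ⟨_, Subtype.restrict P Xi ∘ ε, p, q, hpq, hqp, fun k => ?_⟩
  have : IsLocalRing (End ((Subtype.restrict P Xi ∘ ε) k)) := hloc (ε k)
  exact J.isLocalRing_endRingCon_quotient (ε k).2
end

section
/- Let A be an exact category (extension-closed full subcategory of an abelian category) and let 0 → X → Y → Z → 0 be an almost split sequence δ. If φ : Ext¹(Z, X) → I is an R-linear form with φ(δ) ≠ 0, then for every object L the bilinear form Hom_{Ā}(L, X) × Ext¹(Z, L) → I, (f̄, η) ↦ φ(f·η), is non-degenerate, where Ā is the injectively stable category. -/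
open CategoryTheory CategoryTheory.Limits

attribute [local instance] CategoryTheory.Abelian.hasFiniteBiproducts

universe v u

namespace AlmostSplit

variable (R : Type v) [CommRing R]
variable {C : Type u} [Category.{v} C] [Abelian C]

/-- `P` is an extension-closed (full, replete) subcategory predicate, i.e. an exact
subcategory of the abelian category `C`. -/
def ExtClosed (P : C → Prop) : Prop :=
  ∀ ⦃X Y Z : C⦄ (f : X ⟶ Y) (g : Y ⟶ Z) (w : f ≫ g = 0),
    (ShortComplex.mk f g w).ShortExact → P X → P Z → P Y

/-- `f` is a proper (admissible) monomorphism of the exact subcategory `P`: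
it fits into a short exact sequence whose cokernel term lies in `P`. -/
def AdmMono (P : C → Prop) {X Y : C} (f : X ⟶ Y) : Prop :=
  ∃ (Z : C) (g : Y ⟶ Z) (w : f ≫ g = 0), (ShortComplex.mk f g w).ShortExact ∧ P Z

/-- `g` is a proper (admissible) epimorphism of the exact subcategory `P`. -/
def AdmEpi (P : C → Prop) {Y Z : C} (g : Y ⟶ Z) : Prop :=
  ∃ (X : C) (f : X ⟶ Y) (w : f ≫ g = 0), (ShortComplex.mk f g w).ShortExact ∧ P X

/-- `u : X ⟶ Y` is injectively trivial: it factors through every proper monomorphism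
out of `X` (with target in the subcategory). -/
def ITriv (P : C → Prop) {X Y : C} (u : X ⟶ Y) : Prop :=
  ∀ ⦃M : C⦄ (v : X ⟶ M), P M → AdmMono P v → ∃ w : M ⟶ Y, v ≫ w = u

/-- `u : X ⟶ Y` is projectively trivial: it factors through every proper epimorphism
onto `Y` (with source in the subcategory). -/
def PTriv (P : C → Prop) {X Y : C} (u : X ⟶ Y) : Prop :=
  ∀ ⦃M : C⦄ (v : M ⟶ Y), P M → AdmEpi P v → ∃ w : X ⟶ M, w ≫ v = u

def IsSection {X Y : C} (f : X ⟶ Y) : Prop := ∃ r : Y ⟶ X, f ≫ r = 𝟙 X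

def IsRetraction {Y Z : C} (g : Y ⟶ Z) : Prop := ∃ s : Z ⟶ Y, s ≫ g = 𝟙 Z

def LeftAlmostSplit (P : C → Prop) {X Y : C} (f : X ⟶ Y) : Prop :=
  ¬ IsSection f ∧ ∀ ⦃M : C⦄, P M → ∀ u : X ⟶ M, ¬ IsSection u → ∃ h : Y ⟶ M, f ≫ h = u

def RightAlmostSplit (P : C → Prop) {Y Z : C} (g : Y ⟶ Z) : Prop :=
  ¬ IsRetraction g ∧ ∀ ⦃M : C⦄, P M → ∀ u : M ⟶ Z, ¬ IsRetraction u → ∃ h : M ⟶ Y, h ≫ g = u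

/-- `0 → X –f→ Y –g→ Z → 0` is an almost split sequence of the exact subcategory `P`:
`f` is minimal left almost split and `g` is minimal right almost split. -/
def AlmostSplitSeq (P : C → Prop) {X Y Z : C} (f : X ⟶ Y) (g : Y ⟶ Z) : Prop :=
  LeftAlmostSplit P f ∧ (∀ h : Y ⟶ Y, f ≫ h = f → IsIso h) ∧
    RightAlmostSplit P g ∧ (∀ h : Y ⟶ Y, h ≫ g = g → IsIso h)

/-- `Z` is Ext-projective in the exact subcategory `P`: every proper epimorphism
(of the subcategory) onto `Z` is a retraction. -/
def ExtProjective (P : C → Prop) (Z : C) : Prop :=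
  ∀ ⦃X Y : C⦄ (f : X ⟶ Y) (g : Y ⟶ Z) (w : f ≫ g = 0),
    (ShortComplex.mk f g w).ShortExact → P X → P Y → IsRetraction g

/-- `X` is Ext-injective in the exact subcategory `P`. -/
def ExtInjective (P : C → Prop) (X : C) : Prop :=
  ∀ ⦃Y Z : C⦄ (f : X ⟶ Y) (g : Y ⟶ Z) (w : f ≫ g = 0),
    (ShortComplex.mk f g w).ShortExact → P Y → P Z → IsSection f

/-- An object is indecomposable. -/
def Indec (X : C) : Prop :=
  ¬ IsZero X ∧ ∀ (A B : C), (X ≅ A ⊞ B) → (IsZero A ∨ IsZero B)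

section Linear

variable [Linear R C]

/-- The injectively trivial morphisms form an `R`-submodule of `Hom(X, Y)`. -/
def ITrivSub (P : C → Prop) (X Y : C) : Submodule R (X ⟶ Y) where
  carrier := {u | ITriv P u}
  add_mem' := by
    intro a b ha hb M v hM hv
    obtain ⟨w1, h1⟩ := ha v hM hv
    obtain ⟨w2, h2⟩ := hb v hM hv
    exact ⟨w1 + w2, by rw [Preadditive.comp_add, h1, h2]⟩
  zero_mem' := by
    intro M v hM hv
    exact ⟨0, by simp⟩
  smul_mem' := by
    intro c a ha M v hM hv
    obtain ⟨w, h⟩ := ha v hM hv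
    exact ⟨c • w, by rw [Linear.comp_smul, h]⟩

/-- The projectively trivial morphisms form an `R`-submodule of `Hom(X, Y)`. -/
def PTrivSub (P : C → Prop) (X Y : C) : Submodule R (X ⟶ Y) where
  carrier := {u | PTriv P u}
  add_mem' := by
    intro a b ha hb M v hM hv
    obtain ⟨w1, h1⟩ := ha v hM hv
    obtain ⟨w2, h2⟩ := hb v hM hv
    exact ⟨w1 + w2, by rw [Preadditive.add_comp, h1, h2]⟩
  zero_mem' := by
    intro M v hM hv
    exact ⟨0, by simp⟩
  smul_mem' := by
    intro c a ha M v hM hv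
    obtain ⟨w, h⟩ := ha v hM hv
    exact ⟨c • w, by rw [Linear.smul_comp, h]⟩

/-- Morphism module of the injectively stable category `Ā`. -/
abbrev HomBar (P : C → Prop) (X Y : C) := (X ⟶ Y) ⧸ ITrivSub R P X Y

/-- Morphism module of the projectively stable category `A̲`. -/
abbrev HomUnder (P : C → Prop) (X Y : C) := (X ⟶ Y) ⧸ PTrivSub R P X Y

end Linear

/-- An axiomatization of the bifunctor `Ext¹` of the exact subcategory `P` (equivalence
classes of short exact sequences in `P` under Baer sum), with its `R`-module structure,
pushout and pullback actions. -/
structure ExtTheory (P : C → Prop) : Type (max u (v + 1)) where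
  ext : C → C → ModuleCat.{v} R
  push : ∀ {Z X X' : C}, (X ⟶ X') → (ext Z X ⟶ ext Z X')
  pull : ∀ {Z' Z X : C}, (Z' ⟶ Z) → (ext Z X ⟶ ext Z' X)
  push_id : ∀ (Z X : C), push (Z := Z) (𝟙 X) = 𝟙 (ext Z X)
  push_comp : ∀ {Z X X' X'' : C} (u : X ⟶ X') (v : X' ⟶ X''),
    push (Z := Z) (u ≫ v) = push u ≫ push v
  pull_id : ∀ (Z X : C), pull (X := X) (𝟙 Z) = 𝟙 (ext Z X)
  pull_comp : ∀ {Z'' Z' Z X : C} (u : Z'' ⟶ Z') (v : Z' ⟶ Z),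
    pull (X := X) (u ≫ v) = pull v ≫ pull u
  push_pull : ∀ {Z' Z X X' : C} (u : X ⟶ X') (v : Z' ⟶ Z),
    push u ≫ pull v = pull v ≫ push (Z := Z') u
  ofSES : ∀ {X Y Z : C} (f : X ⟶ Y) (g : Y ⟶ Z) (w : f ≫ g = 0),
    (ShortComplex.mk f g w).ShortExact → P X → P Y → P Z → ext Z X
  ofSES_eq_zero_iff : ∀ {X Y Z : C} (f : X ⟶ Y) (g : Y ⟶ Z) (w : f ≫ g = 0)
    (hse : (ShortComplex.mk f g w).ShortExact) (hX : P X) (hY : P Y) (hZ : P Z),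
    ofSES f g w hse hX hY hZ = 0 ↔ IsSection f
  ofSES_surj : ∀ {Z X : C} (hZ : P Z) (hX : P X) (e : ext Z X),
    ∃ (Y : C) (f : X ⟶ Y) (g : Y ⟶ Z) (w : f ≫ g = 0)
      (hse : (ShortComplex.mk f g w).ShortExact) (hY : P Y),
      ofSES f g w hse hX hY hZ = e
  push_ofSES : ∀ {X Y Z X' Y' : C} (f : X ⟶ Y) (g : Y ⟶ Z) (w : f ≫ g = 0)
    (hse : (ShortComplex.mk f g w).ShortExact) (hX : P X) (hY : P Y) (hZ : P Z)
    (f' : X' ⟶ Y') (g' : Y' ⟶ Z) (w' : f' ≫ g' = 0)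
    (hse' : (ShortComplex.mk f' g' w').ShortExact) (hX' : P X') (hY' : P Y')
    (u : X ⟶ X') (vv : Y ⟶ Y'), f ≫ vv = u ≫ f' → vv ≫ g' = g →
    push u (ofSES f g w hse hX hY hZ) = ofSES f' g' w' hse' hX' hY' hZ
  pull_ofSES : ∀ {X Y Z Y' Z' : C} (f : X ⟶ Y) (g : Y ⟶ Z) (w : f ≫ g = 0)
    (hse : (ShortComplex.mk f g w).ShortExact) (hX : P X) (hY : P Y) (hZ : P Z)
    (f' : X ⟶ Y') (g' : Y' ⟶ Z') (w' : f' ≫ g' = 0)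
    (hse' : (ShortComplex.mk f' g' w').ShortExact) (hY' : P Y') (hZ' : P Z')
    (t : Z' ⟶ Z) (vv : Y' ⟶ Y), f' ≫ vv = f → g' ≫ t = vv ≫ g →
    pull t (ofSES f g w hse hX hY hZ) = ofSES f' g' w' hse' hX hY' hZ'

/-- A cogenerator of `Mod R`. -/
def IsCogenerator (I : Type v) [AddCommGroup I] [Module R I] : Prop :=
  ∀ (M : Type v) [AddCommGroup M] [Module R M] (m : M), m ≠ 0 → ∃ φ : M →ₗ[R] I, φ m ≠ 0

/-- The minimal injective cogenerator of `Mod R`: an injective cogenerator embedding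
into every injective cogenerator. -/
def IsMinimalInjectiveCogenerator (I : Type v) [AddCommGroup I] [Module R I] : Prop :=
  Module.Injective R I ∧ IsCogenerator R I ∧
    ∀ (J : Type v) [AddCommGroup J] [Module R J], Module.Injective R J →
      IsCogenerator R J → ∃ ι : I →ₗ[R] J, Function.Injective ι

end AlmostSplit
namespace AlmostSplit

variable {C : Type u} [Category.{v} C] [Abelian C]

/-- `M` is a (nonzero or zero) Krull-Schmidt object: a finite direct sum of objects with
local endomorphism rings. -/
def KSObject (M : C) : Prop :=
  ∃ (n : ℕ) (Xi : Fin n → C) (_ : M ≅ ⨁ Xi), ∀ i, IsLocalRing (End (Xi i))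

/-- The exact subcategory `P` has right almost split sequences. -/
def HasRightASS (P : C → Prop) : Prop :=
  ∀ ⦃Z : C⦄, P Z → Indec Z → ¬ ExtProjective P Z →
    ∃ (X Y : C) (f : X ⟶ Y) (g : Y ⟶ Z) (w : f ≫ g = 0)
      (_ : (ShortComplex.mk f g w).ShortExact), P X ∧ P Y ∧ AlmostSplitSeq P f g

/-- The exact subcategory `P` has left almost split sequences. -/
def HasLeftASS (P : C → Prop) : Prop :=
  ∀ ⦃X : C⦄, P X → Indec X → ¬ ExtInjective P X →
    ∃ (Y Z : C) (f : X ⟶ Y) (g : Y ⟶ Z) (w : f ≫ g = 0)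
      (_ : (ShortComplex.mk f g w).ShortExact), P Y ∧ P Z ∧ AlmostSplitSeq P f g

/-- `f : M ⟶ X` is a right injectively stable `Q`-approximation of `X`, relative to the
ambient exact subcategory `P`. -/
def RightInjStableApprox (P Q : C → Prop) {M X : C} (f : M ⟶ X) : Prop :=
  Q M ∧ ∀ ⦃L : C⦄, Q L → ∀ h : L ⟶ X, ∃ u : L ⟶ M, ITriv P (h - u ≫ f)

/-- The image of `f` in the injectively stable category is right minimal. -/
def RightMinimalBar (P : C → Prop) {M X : C} (f : M ⟶ X) : Prop :=
  ∀ h : M ⟶ M, ITriv P (h ≫ f - f) →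
    ∃ h' : M ⟶ M, ITriv P (h ≫ h' - 𝟙 M) ∧ ITriv P (h' ≫ h - 𝟙 M)

/-- Minimal right injectively stable `Q`-approximation. -/
def MinRightInjStableApprox (P Q : C → Prop) {M X : C} (f : M ⟶ X) : Prop :=
  RightInjStableApprox P Q f ∧ RightMinimalBar P f ∧
    ∀ (N : C) (u : N ⟶ M) (r : M ⟶ N), u ≫ r = 𝟙 N → ExtInjective P N → IsZero N

/-- `g : X ⟶ N` is a left projectively stable `Q`-approximation of `X`. -/
def LeftProjStableApprox (P Q : C → Prop) {X N : C} (g : X ⟶ N) : Prop :=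
  Q N ∧ ∀ ⦃L : C⦄, Q L → ∀ h : X ⟶ L, ∃ u : N ⟶ L, PTriv P (h - g ≫ u)

/-- The image of `g` in the projectively stable category is left minimal. -/
def LeftMinimalUnder (P : C → Prop) {X N : C} (g : X ⟶ N) : Prop :=
  ∀ h : N ⟶ N, PTriv P (g ≫ h - g) →
    ∃ h' : N ⟶ N, PTriv P (h ≫ h' - 𝟙 N) ∧ PTriv P (h' ≫ h - 𝟙 N)

/-- Minimal left projectively stable `Q`-approximation. -/
def MinLeftProjStableApprox (P Q : C → Prop) {X N : C} (g : X ⟶ N) : Prop :=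
  LeftProjStableApprox P Q g ∧ LeftMinimalUnder P g ∧
    ∀ (L : C) (u : L ⟶ N) (r : N ⟶ L), u ≫ r = 𝟙 L → ExtProjective P L → IsZero L

end AlmostSplit
/-!
Since `f` is left almost split, the class `δ` of the almost split sequence is a pullback of
every non-split extension starting at `X`; since `g` is right almost split, `δ` is a pushout of
every non-split extension ending at `Z`. If `h : L ⟶ X` is not injectively trivial, it fails
to factor through some proper monomorphism `v : L ⟶ M`, so pushing the class `ε` of `v` out
along `h` gives a non-split extension, whence `δ = h·(ε·s)` for some `s`. If `η ≠ 0`, then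
`δ = h·η` for some `h`. In both cases `φ (h·η) = φ δ ≠ 0`.
-/

namespace AlmostSplit

section

variable {C : Type u} [Category.{v} C] [Abelian C]

lemma shortExact_pushout {L M N X : C} (v : L ⟶ M) (q : M ⟶ N) (w : v ≫ q = 0)
    (hse : (ShortComplex.mk v q w).ShortExact) (h : L ⟶ X) :
    (ShortComplex.mk (pushout.inr v h) (pushout.desc q 0 (by rw [w, comp_zero]))
      (pushout.inr_desc _ _ _)).ShortExact := by
  have := hse.mono_f
  have := hse.epi_g
  have : Epi (pushout.desc q 0 (by rw [w, comp_zero]) : pushout v h ⟶ N) :=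
    epi_of_epi_fac (pushout.inl_desc _ _ _)
  refine .mk' (ShortComplex.exact_of_g_is_cokernel _
    (CokernelCofork.IsColimit.ofπ' _ _ fun {T} k hk => ?_)) inferInstance inferInstance
  have hvk : v ≫ pushout.inl v h ≫ k = 0 := by
    rw [← Category.assoc, pushout.condition, Category.assoc, hk, comp_zero]
  obtain ⟨l, hl⟩ := CokernelCofork.IsColimit.desc' hse.gIsCokernel _ hvk
  refine ⟨l, pushout.hom_ext ?_ ?_⟩
  · rw [pushout.inl_desc_assoc]
    exact hl
  · rw [pushout.inr_desc_assoc, zero_comp, hk]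

lemma not_isSection_pushout_inr {L M X : C} {v : L ⟶ M} {h : L ⟶ X}
    (hh : ¬ ∃ u : M ⟶ X, v ≫ u = h) : ¬ IsSection (pushout.inr v h) := by
  rintro ⟨r, hr⟩
  exact hh ⟨pushout.inl v h ≫ r, by rw [← Category.assoc, pushout.condition, Category.assoc,
    hr, Category.comp_id]⟩

lemma isSection_of_isRetraction {X Y Z : C} {f : X ⟶ Y} {g : Y ⟶ Z} {w : f ≫ g = 0}
    (hse : (ShortComplex.mk f g w).ShortExact) (hg : IsRetraction g) : IsSection f := by
  obtain ⟨s, hs⟩ := hg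
  have := hse.mono_f
  let σ := ShortComplex.Splitting.ofExactOfSection _ hse.exact s hs inferInstance
  exact ⟨σ.r, σ.f_r⟩

variable {R : Type v} [CommRing R] {P : C → Prop} (E : ExtTheory R P)
variable {X Y Z : C} {f : X ⟶ Y} {g : Y ⟶ Z} {w : f ≫ g = 0}
  (hse : (ShortComplex.mk f g w).ShortExact) (hX : P X) (hY : P Y) (hZ : P Z)

lemma LeftAlmostSplit.exists_pull_ofSES_eq (hf : LeftAlmostSplit P f)
    {Y' Z' : C} {f' : X ⟶ Y'} {g' : Y' ⟶ Z'} {w' : f' ≫ g' = 0}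
    (hse' : (ShortComplex.mk f' g' w').ShortExact) (hY' : P Y') (hZ' : P Z')
    (hf' : ¬ IsSection f') :
    ∃ s : Z ⟶ Z', E.pull s (E.ofSES f' g' w' hse' hX hY' hZ') = E.ofSES f g w hse hX hY hZ := by
  obtain ⟨t, ht⟩ := hf.2 hY' f' hf'
  have hft : f ≫ t ≫ g' = 0 := by rw [← Category.assoc, ht, w']
  obtain ⟨s, hs⟩ := CokernelCofork.IsColimit.desc' hse.gIsCokernel _ hft
  exact ⟨s, E.pull_ofSES f' g' w' hse' hX hY' hZ' f g w hse hY hZ s t ht hs⟩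

lemma RightAlmostSplit.exists_push_ofSES_eq (hg : RightAlmostSplit P g)
    {X' Y' : C} {f' : X' ⟶ Y'} {g' : Y' ⟶ Z} {w' : f' ≫ g' = 0}
    (hse' : (ShortComplex.mk f' g' w').ShortExact) (hX' : P X') (hY' : P Y')
    (hf' : ¬ IsSection f') :
    ∃ u : X' ⟶ X, E.push u (E.ofSES f' g' w' hse' hX' hY' hZ) = E.ofSES f g w hse hX hY hZ := by
  obtain ⟨t, ht⟩ := hg.2 hY' g' (fun hr => hf' (isSection_of_isRetraction hse' hr))
  have hft : (f' ≫ t) ≫ g = 0 := by rw [Category.assoc, ht, w']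
  obtain ⟨u, hu⟩ := KernelFork.IsLimit.lift' hse.fIsKernel _ hft
  exact ⟨u, E.push_ofSES f' g' w' hse' hX' hY' hZ f g w hse hX hY u t hu.symm ht⟩

lemma ExtTheory.pull_push_apply {Z' X' : C} (u : X ⟶ X') (s : Z' ⟶ Z) (e : E.ext Z X) :
    E.pull s (E.push u e) = E.push u (E.pull s e) :=
  congrArg (fun ψ => ψ e) (E.push_pull u s)

lemma exists_push_eq_ofSES_of_not_iTriv (hP : ExtClosed P) (hf : LeftAlmostSplit P f)
    {L : C} (hL : P L) {h : L ⟶ X} (hh : ¬ ITriv P h) :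
    ∃ η : E.ext Z L, E.push h η = E.ofSES f g w hse hX hY hZ := by
  simp only [ITriv, not_forall] at hh
  obtain ⟨M, v, hM, ⟨N, q, wq, hseq, hN⟩, hv⟩ := hh
  have hseQ := shortExact_pushout v q wq hseq h
  have hQ := hP _ _ _ hseQ hX hN
  obtain ⟨s, hs⟩ :=
    hf.exists_pull_ofSES_eq E hse hX hY hZ hseQ hQ hN (not_isSection_pushout_inr hv)
  have hpush : E.push h (E.ofSES v q wq hseq hL hM hN) = E.ofSES _ _ _ hseQ hX hQ hN :=
    E.push_ofSES v q wq hseq hL hM hN _ _ _ hseQ hX hQ h (pushout.inl v h) pushout.condition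
      (pushout.inl_desc _ _ _)
  refine ⟨E.pull s (E.ofSES v q wq hseq hL hM hN), ?_⟩
  rw [← hs, ← hpush, E.pull_push_apply]

lemma exists_push_eq_ofSES_of_ne_zero (hg : RightAlmostSplit P g) {L : C} (hL : P L)
    {η : E.ext Z L} (hη : η ≠ 0) : ∃ h : L ⟶ X, E.push h η = E.ofSES f g w hse hX hY hZ := by
  obtain ⟨M, i, p, wip, hsei, hM, rfl⟩ := E.ofSES_surj hZ hL η
  exact hg.exists_push_ofSES_eq E hse hX hY hZ hsei hL hM
    fun hi => hη ((E.ofSES_eq_zero_iff i p wip hsei hL hM hZ).2 hi)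

end

theorem stmt8_general {R : Type v} [CommRing R] {C : Type u} [Category.{v} C] [Abelian C]
    (P : C → Prop) (hP : ExtClosed P) (E : ExtTheory R P)
    (I : Type v) [AddCommGroup I] [Module R I]
    {X Y Z : C} (f : X ⟶ Y) (g : Y ⟶ Z) (w : f ≫ g = 0)
    (hse : (ShortComplex.mk f g w).ShortExact) (hX : P X) (hY : P Y) (hZ : P Z)
    (hass : AlmostSplitSeq P f g)
    (φ : ↥(E.ext Z X) →ₗ[R] I) (hφ : φ (E.ofSES f g w hse hX hY hZ) ≠ 0)
    (L : C) (hL : P L) :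
    (∀ h : L ⟶ X, ¬ ITriv P h → ∃ η : E.ext Z L, φ (E.push h η) ≠ 0) ∧
    (∀ η : E.ext Z L, η ≠ 0 → ∃ h : L ⟶ X, φ (E.push h η) ≠ 0) := by
  refine ⟨fun h hh => ?_, fun η hη => ?_⟩
  · obtain ⟨η, hη⟩ := exists_push_eq_ofSES_of_not_iTriv E hse hX hY hZ hP hass.1 hL hh
    exact ⟨η, hη ▸ hφ⟩
  · obtain ⟨h, hh⟩ := exists_push_eq_ofSES_of_ne_zero E hse hX hY hZ hass.2.2.1 hL hη
    exact ⟨h, hh ▸ hφ⟩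

/-- Gabriel–Roiter; Proposition 2.2(1): if `δ : 0 → X → Y → Z → 0` is an
almost split sequence in the exact category given by `P` and `φ` is an `R`-linear form on
`Ext¹(Z, X)` with `φ(δ) ≠ 0`, then for every object `L` of the exact category, the bilinear
form `Hom_Ā(L, X) × Ext¹(Z, L) → I, (f̄, η) ↦ φ(f·η)` is non-degenerate. -/
theorem stmt8 {R : Type v} [CommRing R] {C : Type u} [Category.{v} C] [Abelian C]
    [Linear R C] (P : C → Prop) (hP : ExtClosed P) (E : ExtTheory R P)
    (I : Type v) [AddCommGroup I] [Module R I]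
    (hInj : Module.Injective R I) (hCog : IsCogenerator R I)
    {X Y Z : C} (f : X ⟶ Y) (g : Y ⟶ Z) (w : f ≫ g = 0)
    (hse : (ShortComplex.mk f g w).ShortExact) (hX : P X) (hY : P Y) (hZ : P Z)
    (hass : AlmostSplitSeq P f g)
    (φ : ↥(E.ext Z X) →ₗ[R] I) (hφ : φ (E.ofSES f g w hse hX hY hZ) ≠ 0)
    (L : C) (hL : P L) :
    (∀ h : L ⟶ X, ¬ ITriv P h → ∃ η : E.ext Z L, φ (E.push h η) ≠ 0) ∧
    (∀ η : E.ext Z L, η ≠ 0 → ∃ h : L ⟶ X, φ (E.push h η) ≠ 0) :=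
  stmt8_general P hP E I f g w hse hX hY hZ hass φ hφ L hL

end AlmostSplit
end

section
/- Let A be an exact category and 0 → X → Y → Z → 0 an almost split sequence δ, and φ an R-linear form on Ext¹(Z,X) with φ(δ) ≠ 0. Then for every object L the bilinear form Ext¹(L, X) × Hom_{A̲}(Z, L) → I, (ζ, g̲) ↦ φ(ζ·g), is non-degenerate, where A̲ is the projectively stable category. -/
open CategoryTheory CategoryTheory.Limits

attribute [local instance] CategoryTheory.Abelian.hasFiniteBiproducts

universe v u

namespace AlmostSplit

/-- Proposition 2.2(2): if `δ : 0 → X → Y → Z → 0` is an almost split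
sequence and `φ` is an `R`-linear form on `Ext¹(Z, X)` with `φ(δ) ≠ 0`, then for every
object `L` the bilinear form `Ext¹(L, X) × Hom_A̲(Z, L) → I, (ζ, g̲) ↦ φ(ζ·g)` is
non-degenerate. -/
theorem stmt9 {R : Type v} [CommRing R] {C : Type u} [Category.{v} C] [Abelian C]
    [Linear R C] (P : C → Prop) (hP : ExtClosed P) (E : ExtTheory R P)
    (I : Type v) [AddCommGroup I] [Module R I]
    (hInj : Module.Injective R I) (hCog : IsCogenerator R I)
    {X Y Z : C} (f : X ⟶ Y) (g : Y ⟶ Z) (w : f ≫ g = 0)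
    (hse : (ShortComplex.mk f g w).ShortExact) (hX : P X) (hY : P Y) (hZ : P Z)
    (hass : AlmostSplitSeq P f g)
    (φ : ↥(E.ext Z X) →ₗ[R] I) (hφ : φ (E.ofSES f g w hse hX hY hZ) ≠ 0)
    (L : C) (hL : P L) :
    (∀ ζ : E.ext L X, ζ ≠ 0 → ∃ h : Z ⟶ L, φ (E.pull h ζ) ≠ 0) ∧
    (∀ h : Z ⟶ L, ¬ PTriv P h → ∃ ζ : E.ext L X, φ (E.pull h ζ) ≠ 0) := by
  constructor
  · -- Part 1: nondegeneracy in the first variable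
    intro ζ hζ
    obtain ⟨Y', f', g', w', hse', hY', hofs⟩ := E.ofSES_surj hL hX ζ
    have hns : ¬ IsSection f' := by
      intro hs
      exact hζ (hofs ▸ (E.ofSES_eq_zero_iff f' g' w' hse' hX hY' hL).mpr hs)
    obtain ⟨h₁, hh₁⟩ := hass.1.2 hY' f' hns
    have hcomp : f ≫ h₁ ≫ g' = 0 := by
      rw [← Category.assoc, hh₁, w']
    have hdesc : ∃ d : Z ⟶ L, g ≫ d = h₁ ≫ g' := by
      obtain ⟨d, hd⟩ := CokernelCofork.IsColimit.desc' hse.gIsCokernel (h₁ ≫ g') hcomp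
      exact ⟨d, hd⟩
    obtain ⟨h, hh⟩ := hdesc
    refine ⟨h, ?_⟩
    have key : E.pull h ζ = E.ofSES f g w hse hX hY hZ := by
      rw [← hofs]
      exact E.pull_ofSES f' g' w' hse' hX hY' hL f g w hse hY hZ h h₁ hh₁ hh
    rw [key]; exact hφ
  · -- Part 2: nondegeneracy in the second variable
    intro h hh
    have hex : ∃ M : C, ∃ v : M ⟶ L, P M ∧ AdmEpi P v ∧ ∀ u : Z ⟶ M, u ≫ v ≠ h := by
      by_contra hc
      push_neg at hc
      exact hh (fun M v hM hv => hc M v hM hv)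
    obtain ⟨M, v, hM, hadm, hnolift⟩ := hex
    obtain ⟨K, k, wk, hsek, hK⟩ := hadm
    haveI : Epi v := hsek.epi_g
    haveI : Mono k := hsek.mono_f
    -- form the pullback of v along h
    have hpq : pullback.fst h v ≫ h = pullback.snd h v ≫ v := pullback.condition
    have hfE0 : (0 : K ⟶ Z) ≫ h = k ≫ v := by rw [wk, zero_comp]
    have hfEq : pullback.lift 0 k hfE0 ≫ pullback.snd h v = k := pullback.lift_snd _ _ _
    have wE : pullback.lift 0 k hfE0 ≫ pullback.fst h v = 0 := pullback.lift_fst _ _ _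
    haveI : Mono (pullback.lift 0 k hfE0 ≫ pullback.snd h v) := by rw [hfEq]; infer_instance
    haveI : Mono (pullback.lift 0 k hfE0) := mono_of_mono _ (pullback.snd h v)
    -- the induced kernel map factorization
    have hlift : ∀ {T : C} (a : T ⟶ pullback h v), a ≫ pullback.fst h v = 0 →
        ∃ b : T ⟶ K, b ≫ k = a ≫ pullback.snd h v := by
      intro T a ha
      obtain ⟨b, hb⟩ := KernelFork.IsLimit.lift' hsek.fIsKernel (a ≫ pullback.snd h v) (by
        rw [Category.assoc, ← hpq, ← Category.assoc, ha, zero_comp])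
      exact ⟨b, hb⟩
    have hker : IsLimit (KernelFork.ofι (pullback.lift 0 k hfE0) wE) := by
      refine KernelFork.IsLimit.ofι _ wE
        (fun {T} a ha => (hlift a ha).choose)
        (fun {T} a ha => ?_) (fun {T} a ha m hm => ?_)
      · apply pullback.hom_ext
        · rw [Category.assoc, wE, comp_zero, ha]
        · rw [Category.assoc, hfEq]
          exact (hlift a ha).choose_spec
      · apply (cancel_mono k).mp
        rw [(hlift a ha).choose_spec, ← hfEq, ← Category.assoc, hm]
    have hseE : (ShortComplex.mk (pullback.lift 0 k hfE0) (pullback.fst h v) wE).ShortExact :=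
      { exact := (ShortComplex.mk _ _ wE).exact_of_f_is_kernel hker }
    have hE' : P (pullback h v) := hP _ _ wE hseE hK hZ
    -- the projection is not a retraction
    have hnr : ¬ IsRetraction (pullback.fst h v) := by
      rintro ⟨s, hs⟩
      refine hnolift (s ≫ pullback.snd h v) ?_
      rw [Category.assoc, ← hpq, ← Category.assoc, hs, Category.id_comp]
    -- g is right almost split
    obtain ⟨t, ht⟩ := hass.2.2.1.2 hE' (pullback.fst h v) hnr
    -- induced map on kernels
    have hu0ex : ∃ u0 : K ⟶ X, u0 ≫ f = pullback.lift 0 k hfE0 ≫ t := by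
      obtain ⟨u0, hu0⟩ := KernelFork.IsLimit.lift' hse.fIsKernel (pullback.lift 0 k hfE0 ≫ t) (by
        rw [Category.assoc, ht, wE])
      exact ⟨u0, hu0⟩
    obtain ⟨u0, hu0⟩ := hu0ex
    refine ⟨E.push u0 (E.ofSES k v wk hsek hK hM hL), ?_⟩
    have hpull : E.pull h (E.ofSES k v wk hsek hK hM hL)
        = E.ofSES (pullback.lift 0 k hfE0) (pullback.fst h v) wE hseE hK hE' hZ :=
      E.pull_ofSES k v wk hsek hK hM hL _ _ wE hseE hE' hZ h (pullback.snd h v) hfEq hpq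
    have hpush : E.push u0 (E.ofSES (pullback.lift 0 k hfE0) (pullback.fst h v) wE hseE hK hE' hZ)
        = E.ofSES f g w hse hX hY hZ :=
      E.push_ofSES _ _ wE hseE hK hE' hZ f g w hse hX hY u0 t hu0.symm ht
    have hcomm : E.pull h (E.push u0 (E.ofSES k v wk hsek hK hM hL))
        = E.push u0 (E.pull h (E.ofSES k v wk hsek hK hM hL)) := by
      have h1 := E.push_pull (Z' := Z) (Z := L) u0 h
      have h2 := congrArg (fun F => F (E.ofSES k v wk hsek hK hM hL)) h1
      simpa using h2
    rw [hcomm, hpull, hpush]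
    exact hφ
end AlmostSplit
end

section
/- Let 0 → X → Y → Z → 0 be an almost split sequence in an exact category A, and let C be an exact subcategory with Z ∈ C. Then Z is Ext-projective in C if and only if the zero map 0 → X is a right injectively stable C-approximation of X, i.e., every morphism L → X with L ∈ C is injectively trivial in A. -/
open CategoryTheory CategoryTheory.Limits

attribute [local instance] CategoryTheory.Abelian.hasFiniteBiproducts

universe v u

namespace AlmostSplit

/-- Lemma 3.2(1): let `0 → X → Y → Z → 0` be an almost split sequence
in the exact category `P` and `Q` an exact subcategory with `Z ∈ Q`. Then `Z` is
Ext-projective in `Q` iff `0 → X` is a right injectively stable `Q`-approximation of `X`,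
i.e. every morphism `L → X` with `L ∈ Q` is injectively trivial. -/
theorem stmt16 {R : Type v} [CommRing R] {C : Type u} [Category.{v} C] [Abelian C]
    [Linear R C] (P Q : C → Prop) (hP : ExtClosed P) (hQ : ExtClosed Q)
    (hQP : ∀ ⦃A : C⦄, Q A → P A)
    {X Y Z : C} (f : X ⟶ Y) (g : Y ⟶ Z) (w : f ≫ g = 0)
    (hse : (ShortComplex.mk f g w).ShortExact) (hX : P X) (hY : P Y) (hZ : P Z)
    (hass : AlmostSplitSeq P f g) (hZQ : Q Z) :
    ExtProjective Q Z ↔ ∀ ⦃L : C⦄, Q L → ∀ h : L ⟶ X, ITriv P h := by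

  obtain ⟨⟨hfns, hlas⟩, hfmin, ⟨hgnr, hgras⟩, hgmin⟩ := hass
  have hmf : Mono f := hse.mono_f
  have heg : Epi g := hse.epi_g
  constructor
  · -- Ext-projective ⇒ every h : L ⟶ X is injectively trivial
    intro hEP L hL h M v hM hv
    obtain ⟨W, c, wc, hsec, hW⟩ := hv
    have hmv : Mono v := hsec.mono_f
    have hec : Epi c := hsec.epi_g
    -- pushout of the admissible mono v along h
    set E := pushout h v with hE
    set i : X ⟶ E := pushout.inl h v with hi0
    set m : M ⟶ E := pushout.inr h v with hm0
    have hcond : h ≫ i = v ≫ m := pushout.condition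
    have hmono_i : Mono i := CategoryTheory.Abelian.mono_pushout_of_mono_g h v
    have hdW : h ≫ (0 : X ⟶ W) = v ≫ c := by rw [wc, comp_zero]
    set c' : E ⟶ W := pushout.desc 0 c hdW with hc'
    have hic' : i ≫ c' = 0 := pushout.inl_desc _ _ _
    have hmc' : m ≫ c' = c := pushout.inr_desc _ _ _
    have hepi_c' : Epi c' := epi_of_epi_fac hmc'
    -- c' is a cokernel of i, hence 0 → X → E → W → 0 is short exact
    have hcolim : IsColimit (CokernelCofork.ofπ c'
        (hic' : (ShortComplex.mk i c' hic').f ≫ c' = 0)) := by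
      refine CokernelCofork.IsColimit.ofπ' c' hic' (fun {A} k hk => ?_)
      have hvmk : v ≫ (m ≫ k) = 0 := by
        rw [← Category.assoc, ← hcond, Category.assoc, hk, comp_zero]
      refine ⟨hsec.exact.desc (m ≫ k) hvmk, ?_⟩
      apply pushout.hom_ext
      · rw [← Category.assoc]
        show (i ≫ c') ≫ _ = i ≫ k
        rw [hic', zero_comp, hk]
      · rw [← Category.assoc]
        show (m ≫ c') ≫ _ = m ≫ k
        rw [hmc']
        exact hsec.exact.g_desc (m ≫ k) hvmk
    have hexE : (ShortComplex.mk i c' hic').Exact :=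
      ShortComplex.exact_of_g_is_cokernel _ hcolim
    have hseE : (ShortComplex.mk i c' hic').ShortExact := { exact := hexE }
    have hPE : P E := hP i c' hic' hseE hX hW
    by_cases hisec : IsSection i
    · obtain ⟨r, hr⟩ := hisec
      exact ⟨m ≫ r, by rw [← Category.assoc, ← hcond, Category.assoc, hr, Category.comp_id]⟩
    · exfalso
      obtain ⟨t, ht⟩ := hlas hPE i hisec
      have hftc' : f ≫ (t ≫ c') = 0 := by rw [← Category.assoc, ht, hic']
      set z : Z ⟶ W := hse.exact.desc (t ≫ c') hftc' with hz
      have hgz : g ≫ z = t ≫ c' := hse.exact.g_desc _ _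
      -- pullback of c along z
      set G := pullback c z with hG
      set p1 : G ⟶ M := pullback.fst c z with hp1
      set p2 : G ⟶ Z := pullback.snd c z with hp2
      have hGcond : p1 ≫ c = p2 ≫ z := pullback.condition
      have hep2 : Epi p2 := CategoryTheory.Abelian.epi_pullback_of_epi_f c z
      have hj0 : v ≫ c = (0 : L ⟶ Z) ≫ z := by rw [wc, zero_comp]
      set j : L ⟶ G := pullback.lift v 0 hj0 with hj
      have hjp1 : j ≫ p1 = v := pullback.lift_fst _ _ _
      have hjp2 : j ≫ p2 = 0 := pullback.lift_snd _ _ _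
      have hmj : Mono j := mono_of_mono_fac hjp1
      have hlimG : IsLimit (KernelFork.ofι j (hjp2 : j ≫ (ShortComplex.mk j p2 hjp2).g = 0)) := by
        refine KernelFork.IsLimit.ofι' j hjp2 (fun {A} k hk => ?_)
        have hkc : (k ≫ p1) ≫ c = 0 := by
          rw [Category.assoc, hGcond, ← Category.assoc, hk, zero_comp]
        refine ⟨hsec.exact.lift (k ≫ p1) hkc, ?_⟩
        apply pullback.hom_ext
        · rw [Category.assoc, hjp1]
          exact hsec.exact.lift_f _ _
        · rw [Category.assoc, hjp2, comp_zero, hk]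
      have hexG : (ShortComplex.mk j p2 hjp2).Exact :=
        ShortComplex.exact_of_f_is_kernel _ hlimG
      have hseG : (ShortComplex.mk j p2 hjp2).ShortExact := { exact := hexG }
      have hQG : Q G := hQ j p2 hjp2 hseG hL hZQ
      obtain ⟨s, hs⟩ := hEP j p2 hjp2 hseG hL hQG
      -- pullback of c' along z
      set F := pullback c' z with hF
      set q1 : F ⟶ E := pullback.fst c' z with hq1
      set q2 : F ⟶ Z := pullback.snd c' z with hq2
      have hFcond : q1 ≫ c' = q2 ≫ z := pullback.condition
      have heq2 : Epi q2 := CategoryTheory.Abelian.epi_pullback_of_epi_f c' z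
      have hiF0 : i ≫ c' = (0 : X ⟶ Z) ≫ z := by rw [hic', zero_comp]
      set iF : X ⟶ F := pullback.lift i 0 hiF0 with hiF
      have hiFq1 : iF ≫ q1 = i := pullback.lift_fst _ _ _
      have hiFq2 : iF ≫ q2 = 0 := pullback.lift_snd _ _ _
      have hmiF : Mono iF := mono_of_mono_fac hiFq1
      have hlimF : IsLimit (KernelFork.ofι iF
          (hiFq2 : iF ≫ (ShortComplex.mk iF q2 hiFq2).g = 0)) := by
        refine KernelFork.IsLimit.ofι' iF hiFq2 (fun {A} k hk => ?_)
        have hkc : (k ≫ q1) ≫ c' = 0 := by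
          rw [Category.assoc, hFcond, ← Category.assoc, hk, zero_comp]
        refine ⟨hexE.lift (k ≫ q1) hkc, ?_⟩
        apply pullback.hom_ext
        · rw [Category.assoc, hiFq1]
          exact hexE.lift_f _ _
        · rw [Category.assoc, hiFq2, comp_zero, hk]
      have hexF : (ShortComplex.mk iF q2 hiFq2).Exact :=
        ShortComplex.exact_of_f_is_kernel _ hlimF
      -- the comparison map Y ⟶ F
      have htg : t ≫ c' = g ≫ z := hgz.symm
      set yF : Y ⟶ F := pullback.lift t g htg with hyF
      have hyFq1 : yF ≫ q1 = t := pullback.lift_fst _ _ _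
      have hyFq2 : yF ≫ q2 = g := pullback.lift_snd _ _ _
      have hfyF : f ≫ yF = iF := by
        apply pullback.hom_ext
        · rw [Category.assoc, hyFq1, hiFq1, ht]
        · rw [Category.assoc, hyFq2, hiFq2, w]
      -- yF is mono and epi, hence iso (five lemma by hand)
      have hmyF : Mono yF := by
        rw [Preadditive.mono_iff_cancel_zero]
        intro A k hk
        have hkg : k ≫ g = 0 := by rw [← hyFq2, ← Category.assoc, hk, zero_comp]
        have ha : hse.exact.lift k hkg ≫ f = k := hse.exact.lift_f _ _
        have h0 : hse.exact.lift k hkg ≫ iF = 0 := by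
          rw [← hfyF, ← Category.assoc, ha, hk]
        have := zero_of_comp_mono iF h0
        rw [← ha, this, zero_comp]
      have heyF : Epi yF := by
        rw [Preadditive.epi_iff_cancel_zero]
        intro A k hk
        have hik : iF ≫ k = 0 := by rw [← hfyF, Category.assoc, hk, comp_zero]
        have hb : q2 ≫ hexF.desc k hik = k := hexF.g_desc _ _
        have hgb : g ≫ hexF.desc k hik = 0 := by
          rw [← hyFq2, Category.assoc, hb, hk]
        have := zero_of_epi_comp g hgb
        rw [← hb, this, comp_zero]
      have hiso : IsIso yF := isIso_of_mono_of_epi yF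
      -- comparison map G ⟶ F and conclusion
      have hGF : (p1 ≫ m) ≫ c' = p2 ≫ z := by rw [Category.assoc, hmc', hGcond]
      set gF : G ⟶ F := pullback.lift (p1 ≫ m) p2 hGF with hgF
      have hgFq2 : gF ≫ q2 = p2 := pullback.lift_snd _ _ _
      have hinv : inv yF ≫ g = q2 := by
        rw [← hyFq2, ← Category.assoc, IsIso.inv_hom_id, Category.id_comp]
      refine hgnr ⟨s ≫ gF ≫ inv yF, ?_⟩
      rw [Category.assoc, Category.assoc, hinv, hgFq2, hs]
  · -- every h : L ⟶ X injectively trivial ⇒ Ext-projective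
    intro hIT A B f' g' w' hse' hA hB
    by_contra hng'
    have hmf' : Mono f' := hse'.mono_f
    have heg' : Epi g' := hse'.epi_g
    obtain ⟨t, ht⟩ := hgras (hQP hB) g' hng'
    have hftg : (f' ≫ t) ≫ g = 0 := by rw [Category.assoc, ht, w']
    set l : A ⟶ X := hse.exact.lift (f' ≫ t) hftg with hldef
    have hl : l ≫ f = f' ≫ t := hse.exact.lift_f _ _
    obtain ⟨w₂, hw₂⟩ := hIT hA l f' (hQP hB) ⟨Z, g', w', hse', hZ⟩
    have hkill : f' ≫ (t - w₂ ≫ f) = 0 := by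
      rw [Preadditive.comp_sub, ← Category.assoc, hw₂, hl, sub_self]
    have hsdef : g' ≫ hse'.exact.desc (t - w₂ ≫ f) hkill = t - w₂ ≫ f :=
      hse'.exact.g_desc _ _
    refine hgnr ⟨hse'.exact.desc (t - w₂ ≫ f) hkill, ?_⟩
    have : g' ≫ hse'.exact.desc (t - w₂ ≫ f) hkill ≫ g = g' ≫ 𝟙 Z := by
      rw [← Category.assoc, hsdef, Preadditive.sub_comp, Category.assoc, ht, w,
        comp_zero, sub_zero, Category.comp_id]
    exact (cancel_epi g').mp this


end AlmostSplit
end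

section
/- Let δ : 0 → X → Y → Z → 0 be an almost split sequence in an exact category A, C an exact subcategory containing Z, and f : M → X a minimal right injectively stable C-approximation. Then for every L ∈ C, the pushout map Ext¹(L, f) : Ext¹(L, M) → Ext¹(L, X) is injective; and a morphism u : L → M in C satisfies f∘u injectively trivial in A if and only if u is injectively trivial in C. Moreover, if Z is not Ext-projective in C, then M is indecomposable. -/
open CategoryTheory CategoryTheory.Limits

attribute [local instance] CategoryTheory.Abelian.hasFiniteBiproducts

universe v u

namespace AlmostSplit

section Stmt17Aux

variable {C : Type u} [Category.{v} C] [Abelian C]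

/-- The canonical split short exact sequence `0 → A → A ⊞ B → B → 0`. -/
lemma biprod_shortExact (A B : C) :
    (ShortComplex.mk (biprod.inl : A ⟶ A ⊞ B) (biprod.snd : A ⊞ B ⟶ B)
      biprod.inl_snd).ShortExact :=
  ShortComplex.Splitting.shortExact
    { r := biprod.fst
      s := biprod.inr
      f_r := biprod.inl_fst
      s_g := biprod.inr_snd
      id := biprod.total }

/-- Pushout of a short exact sequence along a morphism out of its left term. -/
lemma pushout_ses {A B Cc A' : C} (i : A ⟶ B) (p : B ⟶ Cc) (w : i ≫ p = 0)
    (hse : (ShortComplex.mk i p w).ShortExact) (u : A ⟶ A') :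
    ∃ (D : C) (i' : A' ⟶ D) (j : B ⟶ D) (p' : D ⟶ Cc) (w' : i' ≫ p' = 0),
      (ShortComplex.mk i' p' w').ShortExact ∧ i ≫ j = u ≫ i' ∧ j ≫ p' = p := by
  haveI : Mono i := hse.mono_f
  haveI : Epi p := hse.epi_g
  have hd : i ≫ p = u ≫ (0 : A' ⟶ Cc) := by rw [w, comp_zero]
  refine ⟨pushout i u, pushout.inr i u, pushout.inl i u, pushout.desc p 0 hd,
    pushout.inr_desc _ _ _, ?_, pushout.condition, pushout.inl_desc _ _ _⟩
  have hfac : pushout.inl i u ≫ pushout.desc p 0 hd = p := pushout.inl_desc _ _ _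
  haveI hepi : Epi (pushout.desc p 0 hd) := epi_of_epi_fac hfac
  have hcoker : IsColimit (CokernelCofork.ofπ (pushout.desc p 0 hd)
      (pushout.inr_desc p 0 hd) : CokernelCofork (pushout.inr i u)) := by
    refine CokernelCofork.IsColimit.ofπ' _ _ (fun {T} k hk => ?_)
    have hik : i ≫ (pushout.inl i u ≫ k) = 0 := by
      rw [← Category.assoc, pushout.condition, Category.assoc, hk, comp_zero]
    obtain ⟨l, hl⟩ := CokernelCofork.IsColimit.desc' hse.gIsCokernel
      (pushout.inl i u ≫ k) hik
    refine ⟨l, ?_⟩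
    apply pushout.hom_ext
    · rw [← Category.assoc, pushout.inl_desc]
      exact hl
    · rw [← Category.assoc, pushout.inr_desc, zero_comp, hk]
  exact ShortComplex.ShortExact.mk' (ShortComplex.exact_of_g_is_cokernel _ hcoker)
    (Abelian.mono_pushout_of_mono_f i u) hepi

lemma ITriv.neg {P : C → Prop} {X Y : C} {u : X ⟶ Y} (h : ITriv P u) : ITriv P (-u) := by
  intro V v hV hadm
  obtain ⟨t, ht⟩ := h v hV hadm
  exact ⟨-t, by rw [Preadditive.comp_neg, ht]⟩

/-- Injectively trivial morphisms are closed under precomposition (with targets in `P`). -/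
lemma ITriv.precomp {P : C → Prop} (hP : ExtClosed P) {L' L T : C} {φ : L ⟶ T}
    (hφ : ITriv P φ) (hL : P L) (y : L' ⟶ L) : ITriv P (y ≫ φ) := by
  intro V v hV hadm
  obtain ⟨W, pv, wv, hsev, hW⟩ := hadm
  obtain ⟨D, v', j, p', w', hse', sq, jp⟩ := pushout_ses v pv wv hsev y
  have hD : P D := hP v' p' w' hse' hL hW
  obtain ⟨wφ, hwφ⟩ := hφ v' hD ⟨W, p', w', hse', hW⟩
  refine ⟨j ≫ wφ, ?_⟩
  rw [← Category.assoc, sq, Category.assoc, hwφ]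

section ExtAux

variable {R : Type v} [CommRing R] {P : C → Prop} (E : ExtTheory R P)

lemma push_comp_apply {Z X X' X'' : C} (u : X ⟶ X') (v : X' ⟶ X'') (e : E.ext Z X) :
    E.push (u ≫ v) e = E.push v (E.push u e) := by
  rw [E.push_comp]; rfl

lemma push_id_apply {Z X : C} (e : E.ext Z X) : E.push (𝟙 X) e = e := by
  rw [E.push_id]; rfl

lemma push_pull_apply {Z' Z X X' : C} (u : X ⟶ X') (v : Z' ⟶ Z) (e : E.ext Z X) :
    E.pull v (E.push u e) = E.push u (E.pull v e) := by
  have h := E.push_pull u v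
  calc E.pull v (E.push u e) = (E.push u ≫ E.pull v) e := rfl
    _ = (E.pull v ≫ E.push (Z := Z') u) e := by rw [h]
    _ = E.push u (E.pull v e) := rfl

/-- If `u` factors through the admissible mono of a short exact sequence then the pushout
of the class of this sequence along `u` vanishes. -/
lemma push_eq_zero_of_factor (hP : ExtClosed P) {L V W T : C} (i : L ⟶ V) (p : V ⟶ W)
    (w : i ≫ p = 0) (hse : (ShortComplex.mk i p w).ShortExact)
    (hL : P L) (hV : P V) (hW : P W) (hT : P T) (u : L ⟶ T) (s : V ⟶ T) (hs : i ≫ s = u) :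
    E.push u (E.ofSES i p w hse hL hV hW) = 0 := by
  have hsplit := biprod_shortExact T W
  have hTW : P (T ⊞ W) := hP _ _ _ hsplit hT hW
  have h1 : E.push u (E.ofSES i p w hse hL hV hW)
      = E.ofSES biprod.inl biprod.snd biprod.inl_snd hsplit hT hTW hW := by
    refine E.push_ofSES i p w hse hL hV hW _ _ _ hsplit hT hTW u (biprod.lift s p) ?_ ?_
    · apply biprod.hom_ext
      · simp [hs]
      · simp [w]
    · simp
  rw [h1, E.ofSES_eq_zero_iff]
  exact ⟨biprod.fst, biprod.inl_fst⟩

/-- Conversely, if the pushout class vanishes then `u` factors through the mono. -/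
lemma factor_of_push_eq_zero (hP : ExtClosed P) {L V W T : C} (i : L ⟶ V) (p : V ⟶ W)
    (w : i ≫ p = 0) (hse : (ShortComplex.mk i p w).ShortExact)
    (hL : P L) (hV : P V) (hW : P W) (hT : P T) (u : L ⟶ T)
    (h0 : E.push u (E.ofSES i p w hse hL hV hW) = 0) : ∃ s : V ⟶ T, i ≫ s = u := by
  obtain ⟨D, i', j, p', w', hse', sq, jp⟩ := pushout_ses i p w hse u
  have hD : P D := hP i' p' w' hse' hT hW
  have h1 : E.push u (E.ofSES i p w hse hL hV hW) = E.ofSES i' p' w' hse' hT hD hW :=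
    E.push_ofSES i p w hse hL hV hW i' p' w' hse' hT hD u j sq jp
  obtain ⟨r, hr⟩ := (E.ofSES_eq_zero_iff i' p' w' hse' hT hD hW).1 (h1 ▸ h0)
  refine ⟨j ≫ r, ?_⟩
  rw [← Category.assoc, sq, Category.assoc, hr, Category.comp_id]

lemma push_zero_map (hP : ExtClosed P) {Z X X' : C} (hZ : P Z) (hX : P X) (hX' : P X')
    (e : E.ext Z X) : E.push (0 : X ⟶ X') e = 0 := by
  obtain ⟨Y, i, p, w, hse, hY, rfl⟩ := E.ofSES_surj hZ hX e
  exact push_eq_zero_of_factor E hP i p w hse hX hY hZ hX' 0 0 (by simp)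

lemma eq_zero_of_push_biprod (hP : ExtClosed P) {Z A B : C} (hZ : P Z) (hA : P A) (hB : P B)
    (e : E.ext Z (A ⊞ B)) (h1 : E.push (biprod.fst : A ⊞ B ⟶ A) e = 0)
    (h2 : E.push (biprod.snd : A ⊞ B ⟶ B) e = 0) : e = 0 := by
  have hAB : P (A ⊞ B) := hP _ _ _ (biprod_shortExact A B) hA hB
  obtain ⟨U, i, p, w, hse, hU, rfl⟩ := E.ofSES_surj hZ hAB e
  obtain ⟨t1, ht1⟩ := factor_of_push_eq_zero E hP i p w hse hAB hU hZ hA _ h1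
  obtain ⟨t2, ht2⟩ := factor_of_push_eq_zero E hP i p w hse hAB hU hZ hB _ h2
  rw [E.ofSES_eq_zero_iff]
  refine ⟨biprod.lift t1 t2, ?_⟩
  apply biprod.hom_ext
  · simp [ht1]
  · simp [ht2]

lemma push_add_map (hP : ExtClosed P) {Z A A' : C} (hZ : P Z) (hA : P A) (hA' : P A')
    (u v : A ⟶ A') (e : E.ext Z A) :
    E.push (u + v) e = E.push u e + E.push v e := by
  have c1 : ∀ (x y : A ⟶ A'), E.push (biprod.fst : A' ⊞ A' ⟶ A')
      (E.push (biprod.lift x y) e) = E.push x e := by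
    intro x y
    rw [← push_comp_apply, biprod.lift_fst]
  have c2 : ∀ (x y : A ⟶ A'), E.push (biprod.snd : A' ⊞ A' ⟶ A')
      (E.push (biprod.lift x y) e) = E.push y e := by
    intro x y
    rw [← push_comp_apply, biprod.lift_snd]
  have key : E.push (biprod.lift u v) e
      = E.push (biprod.lift u 0) e + E.push (biprod.lift 0 v) e := by
    have hz : E.push (biprod.lift u v) e - E.push (biprod.lift u 0) e
        - E.push (biprod.lift 0 v) e = 0 := by
      apply eq_zero_of_push_biprod E hP hZ hA' hA'
      · rw [map_sub, map_sub, c1, c1, c1]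
        rw [push_zero_map E hP hZ hA hA']
        abel
      · rw [map_sub, map_sub, c2, c2, c2]
        rw [push_zero_map E hP hZ hA hA']
        abel
    have := sub_eq_zero.1 (by rw [sub_sub] at hz; exact hz)
    exact this
  have hl : ∀ (x y : A ⟶ A'), (biprod.lift x y : A ⟶ A' ⊞ A') ≫ biprod.desc (𝟙 A') (𝟙 A')
      = x + y := by
    intro x y
    rw [biprod.lift_desc, Category.comp_id, Category.comp_id]
  calc E.push (u + v) e
      = E.push (biprod.lift u v ≫ biprod.desc (𝟙 A') (𝟙 A')) e := by rw [hl]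
    _ = E.push (biprod.desc (𝟙 A') (𝟙 A')) (E.push (biprod.lift u v) e) := by
        rw [push_comp_apply]
    _ = E.push (biprod.desc (𝟙 A') (𝟙 A')) (E.push (biprod.lift u 0) e)
        + E.push (biprod.desc (𝟙 A') (𝟙 A')) (E.push (biprod.lift 0 v) e) := by
        rw [key, map_add]
    _ = E.push (u + 0) e + E.push (0 + v) e := by rw [← push_comp_apply, ← push_comp_apply, hl, hl]
    _ = E.push u e + E.push v e := by rw [add_zero, zero_add]

end ExtAux

end Stmt17Aux

/-- Part (1): the pushout map `Ext¹(L, M) → Ext¹(L, X)` along a minimal right injectively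
stable approximation is injective for `L ∈ Q`. -/
lemma stmt17_aux1 {R : Type v} [CommRing R] {C : Type u} [Category.{v} C] [Abelian C]
    (P Q : C → Prop) (hP : ExtClosed P) (hQ : ExtClosed Q)
    (hQP : ∀ ⦃A : C⦄, Q A → P A) (E : ExtTheory R P)
    {X M : C} (hX : P X) (fM : M ⟶ X) (hQM : Q M)
    (happrox : ∀ ⦃L : C⦄, Q L → ∀ h : L ⟶ X, ∃ u : L ⟶ M, ITriv P (h - u ≫ fM))
    (hmin : RightMinimalBar P fM)
    {L : C} (hL : Q L) : Function.Injective (E.push (Z := L) fM) := by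
  rw [injective_iff_map_eq_zero]
  intro e he
  obtain ⟨N', a', b', w', hse', hPN', heq⟩ := E.ofSES_surj (hQP hL) (hQP hQM) e
  have hQN' : Q N' := hQ a' b' w' hse' hQM hL
  obtain ⟨t, ht⟩ := factor_of_push_eq_zero E hP a' b' w' hse' (hQP hQM) hPN' (hQP hL) hX fM
    (by rw [heq]; exact he)
  obtain ⟨s, hs⟩ := happrox hQN' t
  have hψ : ITriv P (a' ≫ (t - s ≫ fM)) := ITriv.precomp hP hs (hQP hQN') a'
  have h1 : ITriv P ((a' ≫ s) ≫ fM - fM) := by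
    have heq2 : (a' ≫ s) ≫ fM - fM = -(a' ≫ (t - s ≫ fM)) := by
      have h3 : a' ≫ (t - s ≫ fM) = fM - (a' ≫ s) ≫ fM := by
        rw [Preadditive.comp_sub, ht, Category.assoc]
      rw [h3, neg_sub]
    rw [heq2]
    exact hψ.neg
  obtain ⟨h', hh1, -⟩ := hmin (a' ≫ s) h1
  obtain ⟨wξ, hwξ⟩ := hh1 a' hPN' ⟨L, b', w', hse', hQP hL⟩
  have hsec : IsSection a' := by
    refine ⟨s ≫ h' - wξ, ?_⟩
    rw [Preadditive.comp_sub, hwξ, ← Category.assoc, sub_sub_cancel]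
  rw [← heq, E.ofSES_eq_zero_iff]
  exact hsec

/-- Part (2): for `u : L ⟶ M` with `L ∈ Q`, `u ≫ fM` is injectively trivial in `P` iff
`u` is injectively trivial in `Q`. -/
lemma stmt17_aux2 {R : Type v} [CommRing R] {C : Type u} [Category.{v} C] [Abelian C]
    (P Q : C → Prop) (hP : ExtClosed P) (hQ : ExtClosed Q)
    (hQP : ∀ ⦃A : C⦄, Q A → P A) (E : ExtTheory R P)
    {X Y Z M : C} (f : X ⟶ Y) (g : Y ⟶ Z) (w : f ≫ g = 0)
    (hse : (ShortComplex.mk f g w).ShortExact) (hX : P X) (hY : P Y) (hZ : P Z)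
    (hlas : LeftAlmostSplit P f) (hZQ : Q Z)
    (fM : M ⟶ X) (hQM : Q M)
    (hinj : ∀ ⦃L : C⦄, Q L → Function.Injective (E.push (Z := L) fM))
    {L : C} (hL : Q L) (u : L ⟶ M) : ITriv P (u ≫ fM) ↔ ITriv Q u := by
  constructor
  · intro hIT M' v hQM' hadmQ
    obtain ⟨C', p', w', hse', hQC'⟩ := hadmQ
    obtain ⟨s', hs'⟩ := hIT v (hQP hQM') ⟨C', p', w', hse', hQP hQC'⟩
    have h0 : E.push (u ≫ fM) (E.ofSES v p' w' hse' (hQP hL) (hQP hQM') (hQP hQC')) = 0 :=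
      push_eq_zero_of_factor E hP v p' w' hse' (hQP hL) (hQP hQM') (hQP hQC') hX (u ≫ fM) s' hs'
    rw [push_comp_apply] at h0
    have h0' : E.push u (E.ofSES v p' w' hse' (hQP hL) (hQP hQM') (hQP hQC')) = 0 := by
      apply hinj hQC'
      rw [h0, map_zero]
    exact factor_of_push_eq_zero E hP v p' w' hse' (hQP hL) (hQP hQM') (hQP hQC')
      (hQP hQM) u h0'
  · intro hQu M₂ v hPM₂ hadm
    obtain ⟨C₂, p₂, w₂, hse₂, hPC₂⟩ := hadm
    obtain ⟨W, i', j', p'', w'', hseW, sq, jp⟩ := pushout_ses v p₂ w₂ hse₂ (u ≫ fM)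
    have hPW : P W := hP i' p'' w'' hseW hX hPC₂
    by_cases hsec : IsSection i'
    · obtain ⟨r, hr⟩ := hsec
      exact ⟨j' ≫ r, by rw [← Category.assoc, sq, Category.assoc, hr, Category.comp_id]⟩
    · exfalso
      obtain ⟨h, hh⟩ := hlas.2 hPW i' hsec
      have hc : f ≫ (h ≫ p'') = 0 := by rw [← Category.assoc, hh, w'']
      obtain ⟨hbar, hhbar⟩ : ∃ hbar : Z ⟶ C₂, g ≫ hbar = h ≫ p'' := by
        obtain ⟨d, hd⟩ := CokernelCofork.IsColimit.desc' hse.gIsCokernel (h ≫ p'') hc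
        exact ⟨d, hd⟩
      have e1 : E.push (u ≫ fM) (E.ofSES v p₂ w₂ hse₂ (hQP hL) hPM₂ hPC₂)
          = E.ofSES i' p'' w'' hseW hX hPW hPC₂ :=
        E.push_ofSES v p₂ w₂ hse₂ (hQP hL) hPM₂ hPC₂ i' p'' w'' hseW hX hPW (u ≫ fM) j' sq jp
      have e2 : E.pull hbar (E.ofSES i' p'' w'' hseW hX hPW hPC₂)
          = E.ofSES f g w hse hX hY hZ :=
        E.pull_ofSES i' p'' w'' hseW hX hPW hPC₂ f g w hse hY hZ hbar h hh hhbar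
      have e3 : E.push fM (E.push u
          (E.pull hbar (E.ofSES v p₂ w₂ hse₂ (hQP hL) hPM₂ hPC₂)))
          = E.ofSES f g w hse hX hY hZ := by
        rw [← push_comp_apply, ← push_pull_apply, e1, e2]
      set ζ := E.pull hbar (E.ofSES v p₂ w₂ hse₂ (hQP hL) hPM₂ hPC₂) with hζdef
      obtain ⟨W₂, f₂, g₂, w₂', hse₂', hPW₂, heq₂⟩ := E.ofSES_surj hZ (hQP hL) ζ
      have hQW₂ : Q W₂ := hQ f₂ g₂ w₂' hse₂' hL hZQ
      obtain ⟨w₂'', hw₂''⟩ := hQu f₂ hQW₂ ⟨Z, g₂, w₂', hse₂', hZQ⟩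
      have hz : E.push u ζ = 0 := by
        rw [← heq₂]
        exact push_eq_zero_of_factor E hP f₂ g₂ w₂' hse₂' (hQP hL) hPW₂ hZ (hQP hQM) u
          w₂'' hw₂''
      have hδ : E.ofSES f g w hse hX hY hZ = 0 := by
        rw [← e3, hz, map_zero]
      exact hlas.1 ((E.ofSES_eq_zero_iff f g w hse hX hY hZ).1 hδ)

/-- Part (3): if `Z` is not Ext-projective in `Q` then `M` is indecomposable. -/
lemma stmt17_aux3 {R : Type v} [CommRing R] {C : Type u} [Category.{v} C] [Abelian C]
    (P Q : C → Prop) (hP : ExtClosed P) (hQ : ExtClosed Q)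
    (hQP : ∀ ⦃A : C⦄, Q A → P A) (E : ExtTheory R P)
    {X Y Z M : C} (f : X ⟶ Y) (g : Y ⟶ Z) (w : f ≫ g = 0)
    (hse : (ShortComplex.mk f g w).ShortExact) (hX : P X) (hY : P Y) (hZ : P Z)
    (hass : AlmostSplitSeq P f g) (hZQ : Q Z)
    (fM : M ⟶ X) (hQM : Q M)
    (happrox : ∀ ⦃L : C⦄, Q L → ∀ h : L ⟶ X, ∃ u : L ⟶ M, ITriv P (h - u ≫ fM))
    (hmin : RightMinimalBar P fM)
    (hnoinj : ∀ (N : C) (u : N ⟶ M) (r : M ⟶ N), u ≫ r = 𝟙 N → ExtInjective P N → IsZero N)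
    (hinj : ∀ ⦃L : C⦄, Q L → Function.Injective (E.push (Z := L) fM))
    (hnp : ¬ ExtProjective Q Z) : Indec M := by
  obtain ⟨hlasf, -, hrasg, -⟩ := hass
  constructor
  · -- `M` is nonzero
    intro hzM
    unfold ExtProjective at hnp
    push_neg at hnp
    obtain ⟨K₀, E₀, k₀, q₀, w₀, hse₀, hQK₀, hQE₀, hnr⟩ := hnp
    obtain ⟨h₀, hh₀⟩ := hrasg.2 (hQP hQE₀) q₀ hnr
    have hc : (k₀ ≫ h₀) ≫ g = 0 := by
      rw [Category.assoc, hh₀, w₀]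
    obtain ⟨w₁, hw₁⟩ : ∃ w₁ : K₀ ⟶ X, w₁ ≫ f = k₀ ≫ h₀ := by
      obtain ⟨l, hl⟩ := KernelFork.IsLimit.lift' hse.fIsKernel (k₀ ≫ h₀) hc
      exact ⟨l, hl⟩
    have hIT : ITriv P w₁ := by
      obtain ⟨s₁, hs₁⟩ := happrox hQK₀ w₁
      have hs0 : s₁ = 0 := hzM.eq_of_tgt s₁ 0
      rw [hs0, zero_comp, sub_zero] at hs₁
      exact hs₁
    obtain ⟨w₂, hw₂⟩ := hIT k₀ (hQP hQE₀) ⟨Z, q₀, w₀, hse₀, hZ⟩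
    have hk : k₀ ≫ (h₀ - w₂ ≫ f) = 0 := by
      rw [Preadditive.comp_sub, ← Category.assoc, hw₂, hw₁, sub_self]
    obtain ⟨s₀, hs₀⟩ : ∃ s₀ : Z ⟶ Y, q₀ ≫ s₀ = h₀ - w₂ ≫ f := by
      obtain ⟨l, hl⟩ := CokernelCofork.IsColimit.desc' hse₀.gIsCokernel (h₀ - w₂ ≫ f) hk
      exact ⟨l, hl⟩
    have hsg : s₀ ≫ g = 𝟙 Z := by
      haveI : Epi q₀ := hse₀.epi_g
      rw [← cancel_epi q₀, ← Category.assoc, hs₀, Preadditive.sub_comp, hh₀,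
        Category.assoc, w, comp_zero, sub_zero, Category.comp_id]
    exact hrasg.1 ⟨s₀, hsg⟩
  · intro A B φ
    set πA : M ⟶ A := φ.hom ≫ biprod.fst with hπA
    set ιA : A ⟶ M := biprod.inl ≫ φ.inv with hιA
    set πB : M ⟶ B := φ.hom ≫ biprod.snd with hπB
    set ιB : B ⟶ M := biprod.inr ≫ φ.inv with hιB
    have hiA : ιA ≫ πA = 𝟙 A := by rw [hιA, hπA]; simp
    have hiB : ιB ≫ πB = 𝟙 B := by rw [hιB, hπB]; simp
    set e₁ : M ⟶ M := πA ≫ ιA with he₁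
    set e₂ : M ⟶ M := πB ≫ ιB with he₂
    have he12 : e₁ ≫ e₂ = 0 := by rw [he₁, he₂, hπA, hιA, hπB, hιB]; simp
    have he21 : e₂ ≫ e₁ = 0 := by rw [he₁, he₂, hπA, hιA, hπB, hιB]; simp
    have hsum : e₁ + e₂ = 𝟙 M := by
      rw [he₁, he₂, hπA, hιA, hπB, hιB, Category.assoc, Category.assoc,
        ← Preadditive.comp_add, ← Category.assoc biprod.fst, ← Category.assoc biprod.snd,
        ← Preadditive.add_comp, biprod.total, Category.id_comp, φ.hom_inv_id]
    have key : ITriv P (e₁ ≫ fM) ∨ ITriv P (e₂ ≫ fM) := by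
      by_contra hcon
      push_neg at hcon
      obtain ⟨hn1, hn2⟩ := hcon
      have mkζ : ∀ ei : M ⟶ M, ¬ ITriv P (ei ≫ fM) →
          ∃ ζ : E.ext Z M, E.push fM (E.push ei ζ) = E.ofSES f g w hse hX hY hZ := by
        intro ei hni
        unfold ITriv at hni
        push_neg at hni
        obtain ⟨V₁, v₁, hPV₁, hadm₁, hnf⟩ := hni
        obtain ⟨C₁, p₁, wp₁, hse₁, hPC₁⟩ := hadm₁
        obtain ⟨W₁, i₁, j₁, q₁, wq₁, hseW₁, sq₁, jq₁⟩ := pushout_ses v₁ p₁ wp₁ hse₁ (ei ≫ fM)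
        have hPW₁ : P W₁ := hP i₁ q₁ wq₁ hseW₁ hX hPC₁
        have hnsec : ¬ IsSection i₁ := by
          rintro ⟨r, hr⟩
          exact hnf (j₁ ≫ r)
            (by rw [← Category.assoc, sq₁, Category.assoc, hr, Category.comp_id])
        obtain ⟨h₁', hh₁'⟩ := hlasf.2 hPW₁ i₁ hnsec
        have hc1 : f ≫ (h₁' ≫ q₁) = 0 := by rw [← Category.assoc, hh₁', wq₁]
        obtain ⟨hbar, hhbar⟩ : ∃ hbar : Z ⟶ C₁, g ≫ hbar = h₁' ≫ q₁ := by
          obtain ⟨d, hd⟩ := CokernelCofork.IsColimit.desc' hse.gIsCokernel (h₁' ≫ q₁) hc1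
          exact ⟨d, hd⟩
        refine ⟨E.pull hbar (E.ofSES v₁ p₁ wp₁ hse₁ (hQP hQM) hPV₁ hPC₁), ?_⟩
        rw [← push_comp_apply, ← push_pull_apply,
          E.push_ofSES v₁ p₁ wp₁ hse₁ (hQP hQM) hPV₁ hPC₁ i₁ q₁ wq₁ hseW₁ hX hPW₁
            (ei ≫ fM) j₁ sq₁ jq₁]
        exact E.pull_ofSES i₁ q₁ wq₁ hseW₁ hX hPW₁ hPC₁ f g w hse hY hZ hbar h₁' hh₁' hhbar
      obtain ⟨ζ₁, hζ₁⟩ := mkζ e₁ hn1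
      obtain ⟨ζ₂, hζ₂⟩ := mkζ e₂ hn2
      have hEq : E.push e₁ ζ₁ = E.push e₂ ζ₂ := hinj hZQ (hζ₁.trans hζ₂.symm)
      have hz2 : E.push e₂ (E.push e₁ ζ₁) = 0 := by
        rw [← push_comp_apply, he12]
        exact push_zero_map E hP hZ (hQP hQM) (hQP hQM) ζ₁
      have hz1 : E.push e₁ (E.push e₁ ζ₁) = 0 := by
        rw [hEq, ← push_comp_apply, he21]
        exact push_zero_map E hP hZ (hQP hQM) (hQP hQM) ζ₂
      have hz : E.push e₁ ζ₁ = 0 := by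
        have hadd := push_add_map E hP hZ (hQP hQM) (hQP hQM) e₁ e₂ (E.push e₁ ζ₁)
        rw [hsum, push_id_apply, hz1, hz2, add_zero] at hadd
        exact hadd
      have hδ : E.ofSES f g w hse hX hY hZ = 0 := by
        rw [← hζ₁, hz, map_zero]
      exact hlasf.1 ((E.ofSES_eq_zero_iff f g w hse hX hY hZ).1 hδ)
    have finish : ∀ (B' : C) (ι : B' ⟶ M) (π : M ⟶ B') (e : M ⟶ M),
        ι ≫ π = 𝟙 B' → ι ≫ e = 0 → ITriv P ((𝟙 M - e) ≫ fM) → IsZero B' := by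
      intro B' ι π e hιπ hιe hITe
      have h1 : ITriv P (e ≫ fM - fM) := by
        have hrw : e ≫ fM - fM = -((𝟙 M - e) ≫ fM) := by
          rw [Preadditive.sub_comp, Category.id_comp, neg_sub]
        rw [hrw]
        exact hITe.neg
      obtain ⟨h', hh', -⟩ := hmin e h1
      have hξ : ITriv P (𝟙 M - e ≫ h') := by
        have hrw : 𝟙 M - e ≫ h' = -(e ≫ h' - 𝟙 M) := by rw [neg_sub]
        rw [hrw]
        exact hh'.neg
      have hBinj : ExtInjective P B' := by
        intro V W' c p hwc hsecw hPV hPW'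
        obtain ⟨U, m, j, p', w', hseU, sq, jp⟩ := pushout_ses c p hwc hsecw ι
        have hPU : P U := hP m p' w' hseU (hQP hQM) hPW'
        obtain ⟨wξ, hwξ⟩ := hξ m hPU ⟨W', p', w', hseU, hPW'⟩
        refine ⟨j ≫ wξ ≫ π, ?_⟩
        have hstep : c ≫ j ≫ wξ ≫ π = ι ≫ (m ≫ wξ) ≫ π := by
          rw [← Category.assoc, sq]
          simp [Category.assoc]
        rw [hstep, hwξ, Preadditive.sub_comp, Preadditive.comp_sub, Category.id_comp, hιπ]
        have hz0 : ι ≫ (e ≫ h') ≫ π = 0 := by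
          rw [← Category.assoc, ← Category.assoc, hιe, zero_comp, zero_comp]
        rw [hz0, sub_zero]
      exact hnoinj B' ι π hιπ hBinj
    rcases key with hITk | hITk
    · left
      refine finish A ιA πA e₂ hiA ?_ ?_
      · rw [he₂, hπB, hιB, hιA]; simp
      · have hrw : 𝟙 M - e₂ = e₁ := by rw [← hsum]; abel
        rw [hrw]; exact hITk
    · right
      refine finish B ιB πB e₁ hiB ?_ ?_
      · rw [he₁, hπA, hιA, hιB]; simp
      · have hrw : 𝟙 M - e₁ = e₂ := by rw [← hsum]; abel
        rw [hrw]; exact hITk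

/-- Lemma 3.3: let `δ : 0 → X → Y → Z → 0` be an almost split sequence
in the exact category `P`, `Q` an exact subcategory containing `Z`, and `fM : M → X` a
minimal right injectively stable `Q`-approximation. Then (1) the pushout map
`Ext¹(L, M) → Ext¹(L, X)` is injective for `L ∈ Q`; (2) for `u : L → M` in `Q`, `fM ∘ u`
is injectively trivial in `P` iff `u` is injectively trivial in `Q`; (3) if `Z` is not
Ext-projective in `Q` then `M` is indecomposable. -/
theorem stmt17 {R : Type v} [CommRing R] {C : Type u} [Category.{v} C] [Abelian C]
    [Linear R C] (P Q : C → Prop) (hP : ExtClosed P) (hQ : ExtClosed Q)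
    (hQP : ∀ ⦃A : C⦄, Q A → P A) (E : ExtTheory R P)
    {X Y Z M : C} (f : X ⟶ Y) (g : Y ⟶ Z) (w : f ≫ g = 0)
    (hse : (ShortComplex.mk f g w).ShortExact) (hX : P X) (hY : P Y) (hZ : P Z)
    (hass : AlmostSplitSeq P f g) (hZQ : Q Z)
    (fM : M ⟶ X) (hfM : MinRightInjStableApprox P Q fM) :
    (∀ ⦃L : C⦄, Q L → Function.Injective (E.push (Z := L) fM)) ∧
    (∀ ⦃L : C⦄, Q L → ∀ u : L ⟶ M, (ITriv P (u ≫ fM) ↔ ITriv Q u)) ∧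
    (¬ ExtProjective Q Z → Indec M) := by
  obtain ⟨⟨hQM, happrox⟩, hmin, hnoinj⟩ := hfM
  have h1 : ∀ ⦃L : C⦄, Q L → Function.Injective (E.push (Z := L) fM) := by
    intro L hL
    exact stmt17_aux1 P Q hP hQ hQP E hX fM hQM happrox hmin hL
  refine ⟨h1, ?_, ?_⟩
  · intro L hL u
    exact stmt17_aux2 P Q hP hQ hQP E f g w hse hX hY hZ hass.1 hZQ fM hQM h1 hL u
  · intro hnp
    exact stmt17_aux3 P Q hP hQ hQP E f g w hse hX hY hZ hass hZQ fM hQM happrox hmin hnoinj h1 hnp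


end AlmostSplit
end
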